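/- arXiv:2110.13444 — 6 statements merged into one kernel-verified Lean document; each statement's English description precedes it below -/
import Mathlib

section
/- Let (E, d_b) be a metric space, let c > 0 and let p be a real number with 1 ≤ p < ∞. Define d_G on Option E by: d_G(some x, some y) = min(c, d_b(x, y)); d_G(none, none) = 0; and d_G(u, v) = c / 2^(1/p) in all other cases. Then d_G is a metric on Option E; that is, for all u, v, w in Option E: d_G(u, v) = 0 if and only if u = v; d_G(u, v) = d_G(v, u); and d_G(u, v) ≤ d_G(u, w) + d_G(w, v). -/
noncomputable section

/-- The GOSPA base distance on `Option E`: between two present targets it is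
`min c (dist x y)`, between two absent targets it is `0`, and it is `c / 2^(1/p)`
in all other (mixed) cases. -/
def dG {E : Type*} [MetricSpace E] (c p : ℝ) : Option E → Option E → ℝ
  | some x, some y => min c (dist x y)
  | none, none => 0
  | _, _ => c / 2 ^ (1 / p)

lemma min_tri (c : ℝ) (hc : 0 < c) (x y z : ℝ) (hx : 0 ≤ x) (hy : 0 ≤ y)
    (hxyz : z ≤ x + y) : min c z ≤ min c x + min c y := by
  rcases le_total c x with h | h
  · have : min c x = c := min_eq_left h
    nlinarith [min_le_left c z, le_min (le_of_lt hc) hy, min_le_left c y]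
  · rcases le_total c y with h2 | h2
    · have : min c y = c := min_eq_left h2
      nlinarith [min_le_left c z, le_min (le_of_lt hc) hx, min_le_left c x]
    · rw [min_eq_right h, min_eq_right h2]
      exact le_trans (min_le_right _ _) hxyz

/-- `dG` is a metric on `Option E`: identity of indiscernibles, symmetry and the
triangle inequality. -/
theorem dG_isMetric {E : Type*} [MetricSpace E] (c p : ℝ) (hc : 0 < c) (hp : 1 ≤ p) :
    ∀ u v w : Option E,
      (dG c p u v = 0 ↔ u = v) ∧
      dG c p u v = dG c p v u ∧
      dG c p u v ≤ dG c p u w + dG c p w v := by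
  set a : ℝ := c / 2 ^ (1 / p) with ha_def
  have hpow_pos : (0:ℝ) < 2 ^ (1/p) := Real.rpow_pos_of_pos (by norm_num) _
  have hpow_le : (2:ℝ) ^ (1/p) ≤ 2 := by
    calc (2:ℝ) ^ (1/p) ≤ 2 ^ (1:ℝ) := by
          apply Real.rpow_le_rpow_of_exponent_le (by norm_num)
          rw [div_le_one (by linarith)]; linarith
      _ = 2 := Real.rpow_one 2
  have ha : 0 < a := div_pos hc hpow_pos
  have h2a : c ≤ 2 * a := by
    have h := mul_le_mul_of_nonneg_left hpow_le (show (0:ℝ) ≤ a from ha.le)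
    have : a * 2 ^ (1/p) = c := by
      rw [ha_def]; field_simp
    nlinarith
  intro u v w
  refine ⟨?_, ?_, ?_⟩
  · match u, v with
    | some x, some y =>
        simp only [dG]
        constructor
        · intro h
          have : dist x y = 0 := by
            rcases min_eq_iff.mp h with h' | h'
            · linarith [h'.1]
            · exact h'.1
          simp [dist_eq_zero.mp this]
        · rintro ⟨rfl⟩
          simp [hc.le]
    | none, none => simp [dG]
    | some x, none => simp [dG, hc.ne', (Real.rpow_pos_of_pos two_pos p⁻¹).ne']
    | none, some y => simp [dG, hc.ne', (Real.rpow_pos_of_pos two_pos p⁻¹).ne']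
  · match u, v with
    | some x, some y => simp [dG, dist_comm]
    | none, none => rfl
    | some x, none => rfl
    | none, some y => rfl
  · have hd : ∀ s t : E, (0:ℝ) ≤ min c (dist s t) := fun s t =>
      le_min hc.le dist_nonneg
    match u, v, w with
    | some x, some y, some z =>
        exact min_tri c hc _ _ _ dist_nonneg dist_nonneg (dist_triangle x z y)
    | some x, some y, none =>
        simp only [dG]; calc min c (dist x y) ≤ c := min_le_left _ _
          _ ≤ a + a := by linarith
    | some x, none, some z => simp only [dG]; linarith [hd x z]
    | some x, none, none => simp only [dG]; linarith
    | none, some y, some z => simp only [dG]; linarith [hd z y]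
    | none, some y, none => simp only [dG]; linarith
    | none, none, some z => simp only [dG]; linarith
    | none, none, none => simp only [dG]; linarith
end
end

section
/- Let nX, nZ, nY be natural numbers. Let A be a real (nX+1)×(nZ+1) matrix and B a real (nZ+1)×(nY+1) matrix, each satisfying the relaxed assignment constraints: all entries nonnegative, each column sum over all rows equals 1 for columns other than the last, each row sum over all columns equals 1 for rows other than the last, and the bottom-right corner entry equals 0. Define the (nX+1)×(nY+1) matrix W by W(i,j) = Σ_{l=1}^{nZ} A(i,l)·B(l,j) for i ≤ nX and j ≤ nY; W(i, nY+1) = 1 − Σ_{j=1}^{nY} W(i,j) for i ≤ nX; W(nX+1, j) = 1 − Σ_{i=1}^{nX} W(i,j) for j ≤ nY; and W(nX+1, nY+1) = 0. Then W also satisfies the relaxed assignment constraints: all entries of W are nonnegative, Σ_{i=1}^{nX+1} W(i,j) = 1 for each j ≤ nY, and Σ_{j=1}^{nY+1} W(i,j) = 1 for each i ≤ nX. -/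
open Finset

noncomputable section

/-- A real `(m+1) × (n+1)` matrix satisfies the relaxed assignment constraints if all
entries are nonnegative, every column sum equals `1` except possibly the last column,
every row sum equals `1` except possibly the last row, and the bottom-right corner is `0`. -/
def Relaxed {m n : ℕ} (W : Matrix (Fin (m + 1)) (Fin (n + 1)) ℝ) : Prop :=
  (∀ i j, 0 ≤ W i j) ∧
  (∀ j : Fin n, ∑ i, W i j.castSucc = 1) ∧
  (∀ i : Fin m, ∑ j, W i.castSucc j = 1) ∧
  W (Fin.last m) (Fin.last n) = 0

/-- The composition of two soft-assignment matrices: `W(i,j) = Σ_l A(i,l) B(l,j)` for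
non-last indices, with the last row and column completed so that the row/column sums are 1,
and a zero bottom-right corner. -/
def compW {nX nZ nY : ℕ} (A : Matrix (Fin (nX + 1)) (Fin (nZ + 1)) ℝ)
    (B : Matrix (Fin (nZ + 1)) (Fin (nY + 1)) ℝ) :
    Matrix (Fin (nX + 1)) (Fin (nY + 1)) ℝ :=
  fun i j =>
    if hi : (i : ℕ) < nX then
      if hj : (j : ℕ) < nY then ∑ l : Fin nZ, A i l.castSucc * B l.castSucc j
      else 1 - ∑ j' : Fin nY, ∑ l : Fin nZ, A i l.castSucc * B l.castSucc j'.castSucc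
    else
      if hj : (j : ℕ) < nY then
        1 - ∑ i' : Fin nX, ∑ l : Fin nZ, A i'.castSucc l.castSucc * B l.castSucc j
      else 0

/-- The composition of two matrices satisfying the relaxed assignment constraints again
satisfies the relaxed assignment constraints. -/
theorem compW_relaxed {nX nZ nY : ℕ} (A : Matrix (Fin (nX + 1)) (Fin (nZ + 1)) ℝ)
    (B : Matrix (Fin (nZ + 1)) (Fin (nY + 1)) ℝ) (hA : Relaxed A) (hB : Relaxed B) :
    Relaxed (compW A B) := by
  obtain ⟨hA0, hAc, hAr, hAz⟩ := hA
  obtain ⟨hB0, hBc, hBr, hBz⟩ := hB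
  -- row sums of A restricted to first nZ columns, for non-last rows
  have hArow : ∀ i : Fin (nX+1), (i:ℕ) < nX → ∑ l : Fin nZ, A i l.castSucc ≤ 1 := by
    intro i hi
    have h1 : (⟨(i:ℕ), hi⟩ : Fin nX).castSucc = i := Fin.ext rfl
    have h2 := hAr ⟨(i:ℕ), hi⟩
    rw [h1, Fin.sum_univ_castSucc] at h2
    linarith [hA0 i (Fin.last nZ)]
  have hBcol : ∀ j : Fin (nY+1), (j:ℕ) < nY → ∑ l : Fin nZ, B l.castSucc j ≤ 1 := by
    intro j hj
    have h1 : (⟨(j:ℕ), hj⟩ : Fin nY).castSucc = j := Fin.ext rfl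
    have h2 := hBc ⟨(j:ℕ), hj⟩
    rw [h1, Fin.sum_univ_castSucc] at h2
    linarith [hB0 (Fin.last nZ) j]
  have hBrow : ∀ l : Fin nZ, ∑ j : Fin nY, B l.castSucc j.castSucc ≤ 1 := by
    intro l
    have h2 := hBr l
    rw [Fin.sum_univ_castSucc] at h2
    linarith [hB0 l.castSucc (Fin.last nY)]
  have hAcol : ∀ l : Fin nZ, ∑ i : Fin nX, A i.castSucc l.castSucc ≤ 1 := by
    intro l
    have h2 := hAc l
    rw [Fin.sum_univ_castSucc] at h2
    linarith [hA0 (Fin.last nX) l.castSucc]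
  -- key: the double sums are ≤ 1
  have key1 : ∀ i : Fin (nX+1), (i:ℕ) < nX →
      ∑ j' : Fin nY, ∑ l : Fin nZ, A i l.castSucc * B l.castSucc j'.castSucc ≤ 1 := by
    intro i hi
    rw [Finset.sum_comm]
    calc ∑ l : Fin nZ, ∑ j' : Fin nY, A i l.castSucc * B l.castSucc j'.castSucc
        = ∑ l : Fin nZ, A i l.castSucc * ∑ j' : Fin nY, B l.castSucc j'.castSucc := by
          simp [Finset.mul_sum]
      _ ≤ ∑ l : Fin nZ, A i l.castSucc * 1 := by
          apply Finset.sum_le_sum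
          intro l _
          exact mul_le_mul_of_nonneg_left (hBrow l) (hA0 i l.castSucc)
      _ ≤ 1 := by simpa using hArow i hi
  have key2 : ∀ j : Fin (nY+1), (j:ℕ) < nY →
      ∑ i' : Fin nX, ∑ l : Fin nZ, A i'.castSucc l.castSucc * B l.castSucc j ≤ 1 := by
    intro j hj
    rw [Finset.sum_comm]
    calc ∑ l : Fin nZ, ∑ i' : Fin nX, A i'.castSucc l.castSucc * B l.castSucc j
        = ∑ l : Fin nZ, (∑ i' : Fin nX, A i'.castSucc l.castSucc) * B l.castSucc j := by
          simp [Finset.sum_mul]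
      _ ≤ ∑ l : Fin nZ, 1 * B l.castSucc j := by
          apply Finset.sum_le_sum
          intro l _
          exact mul_le_mul_of_nonneg_right (hAcol l) (hB0 l.castSucc j)
      _ ≤ 1 := by simpa using hBcol j hj
  refine ⟨?_, ?_, ?_, ?_⟩
  · intro i j
    unfold compW
    split_ifs with hi hj hj
    · exact Finset.sum_nonneg fun l _ => mul_nonneg (hA0 _ _) (hB0 _ _)
    · linarith [key1 i hi]
    · linarith [key2 j hj]
    · exact le_refl 0
  · intro j
    have hj : ((j.castSucc : Fin (nY+1)) : ℕ) < nY := j.isLt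
    rw [Fin.sum_univ_castSucc]
    have h1 : ∀ i : Fin nX, compW A B i.castSucc j.castSucc =
        ∑ l : Fin nZ, A i.castSucc l.castSucc * B l.castSucc j.castSucc := by
      intro i
      simp [compW, i.isLt, hj]
    have h2 : compW A B (Fin.last nX) j.castSucc =
        1 - ∑ i' : Fin nX, ∑ l : Fin nZ, A i'.castSucc l.castSucc * B l.castSucc j.castSucc := by
      simp [compW, hj]
    rw [h2, Finset.sum_congr rfl fun i _ => h1 i]
    ring
  · intro i
    have hi : ((i.castSucc : Fin (nX+1)) : ℕ) < nX := i.isLt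
    rw [Fin.sum_univ_castSucc]
    have h1 : ∀ j : Fin nY, compW A B i.castSucc j.castSucc =
        ∑ l : Fin nZ, A i.castSucc l.castSucc * B l.castSucc j.castSucc := by
      intro j
      simp [compW, j.isLt, hi]
    have h2 : compW A B i.castSucc (Fin.last nY) =
        1 - ∑ j' : Fin nY, ∑ l : Fin nZ, A i.castSucc l.castSucc * B l.castSucc j'.castSucc := by
      simp [compW, hi]
    rw [h2, Finset.sum_congr rfl fun j _ => h1 j]
    ring
  · simp [compW]
end
end

section
/- Let nX, nZ, nY be natural numbers. Let A, A' be real (nX+1)×(nZ+1) matrices and B, B' real (nZ+1)×(nY+1) matrices, each satisfying the relaxed assignment constraints. Define W(i,j) = Σ_{l=1}^{nZ} A(i,l)·B(l,j) and W'(i,j) = Σ_{l=1}^{nZ} A'(i,l)·B'(l,j) for i ≤ nX, j ≤ nY. Then Σ_{i=1}^{nX} Σ_{j=1}^{nY} |W(i,j) − W'(i,j)| ≤ Σ_{i=1}^{nX} Σ_{l=1}^{nZ} |A(i,l) − A'(i,l)| + Σ_{l=1}^{nZ} Σ_{j=1}^{nY} |B(l,j) − B'(l,j)|. -/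
open Finset

noncomputable section

/-- Switching-cost inequality: the total variation between the compositions of two pairs
of soft-assignment matrices is bounded by the sum of the total variations of each pair. -/
theorem switching_ineq {nX nZ nY : ℕ}
    (A A' : Matrix (Fin (nX + 1)) (Fin (nZ + 1)) ℝ)
    (B B' : Matrix (Fin (nZ + 1)) (Fin (nY + 1)) ℝ)
    (hA : Relaxed A) (hA' : Relaxed A') (hB : Relaxed B) (hB' : Relaxed B') :
    ∑ i : Fin nX, ∑ j : Fin nY,
        |(∑ l : Fin nZ, A i.castSucc l.castSucc * B l.castSucc j.castSucc) -
          ∑ l : Fin nZ, A' i.castSucc l.castSucc * B' l.castSucc j.castSucc| ≤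
      (∑ i : Fin nX, ∑ l : Fin nZ, |A i.castSucc l.castSucc - A' i.castSucc l.castSucc|) +
        ∑ l : Fin nZ, ∑ j : Fin nY, |B l.castSucc j.castSucc - B' l.castSucc j.castSucc| := by
  obtain ⟨hApos, -, -, -⟩ := hA
  obtain ⟨hA'pos, hA'col, -, -⟩ := hA'
  obtain ⟨hBpos, -, hBrow, -⟩ := hB
  obtain ⟨hB'pos, -, -, -⟩ := hB'
  -- partial row sums of B are ≤ 1
  have hBle : ∀ l : Fin nZ, ∑ j : Fin nY, B l.castSucc j.castSucc ≤ 1 := by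
    intro l
    have h := hBrow l
    rw [Fin.sum_univ_castSucc] at h
    have := hBpos l.castSucc (Fin.last nY)
    linarith
  -- partial column sums of A' are ≤ 1
  have hA'le : ∀ l : Fin nZ, ∑ i : Fin nX, A' i.castSucc l.castSucc ≤ 1 := by
    intro l
    have h := hA'col l
    rw [Fin.sum_univ_castSucc] at h
    have := hA'pos (Fin.last nX) l.castSucc
    linarith
  have step1 : ∀ (i : Fin nX) (j : Fin nY),
      |(∑ l : Fin nZ, A i.castSucc l.castSucc * B l.castSucc j.castSucc) -
        ∑ l : Fin nZ, A' i.castSucc l.castSucc * B' l.castSucc j.castSucc| ≤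
      (∑ l : Fin nZ,
        |A i.castSucc l.castSucc - A' i.castSucc l.castSucc| * B l.castSucc j.castSucc) +
      ∑ l : Fin nZ,
        A' i.castSucc l.castSucc * |B l.castSucc j.castSucc - B' l.castSucc j.castSucc| := by
    intro i j
    rw [← Finset.sum_sub_distrib, ← Finset.sum_add_distrib]
    refine (Finset.abs_sum_le_sum_abs _ _).trans (Finset.sum_le_sum fun l _ => ?_)
    have hd : A i.castSucc l.castSucc * B l.castSucc j.castSucc -
        A' i.castSucc l.castSucc * B' l.castSucc j.castSucc =
        (A i.castSucc l.castSucc - A' i.castSucc l.castSucc) * B l.castSucc j.castSucc +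
        A' i.castSucc l.castSucc * (B l.castSucc j.castSucc - B' l.castSucc j.castSucc) := by
      ring
    rw [hd]
    refine (abs_add_le _ _).trans ?_
    rw [abs_mul, abs_mul, abs_of_nonneg (hBpos _ _), abs_of_nonneg (hA'pos _ _)]
  calc ∑ i : Fin nX, ∑ j : Fin nY,
        |(∑ l : Fin nZ, A i.castSucc l.castSucc * B l.castSucc j.castSucc) -
          ∑ l : Fin nZ, A' i.castSucc l.castSucc * B' l.castSucc j.castSucc|
      ≤ ∑ i : Fin nX, ∑ j : Fin nY, ((∑ l : Fin nZ,
          |A i.castSucc l.castSucc - A' i.castSucc l.castSucc| * B l.castSucc j.castSucc) +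
          ∑ l : Fin nZ,
          A' i.castSucc l.castSucc * |B l.castSucc j.castSucc - B' l.castSucc j.castSucc|) :=
        Finset.sum_le_sum fun i _ => Finset.sum_le_sum fun j _ => step1 i j
    _ = (∑ i : Fin nX, ∑ l : Fin nZ,
          |A i.castSucc l.castSucc - A' i.castSucc l.castSucc| *
            ∑ j : Fin nY, B l.castSucc j.castSucc) +
        ∑ l : Fin nZ, (∑ i : Fin nX, A' i.castSucc l.castSucc) *
          ∑ j : Fin nY, |B l.castSucc j.castSucc - B' l.castSucc j.castSucc| := by
        simp only [Finset.sum_add_distrib, Finset.mul_sum, Finset.sum_mul]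
        congr 1
        · exact Finset.sum_congr rfl fun i _ => Finset.sum_comm
        · exact Finset.sum_comm.trans ((Finset.sum_congr rfl fun j _ => Finset.sum_comm).trans Finset.sum_comm)
    _ ≤ (∑ i : Fin nX, ∑ l : Fin nZ,
          |A i.castSucc l.castSucc - A' i.castSucc l.castSucc|) +
        ∑ l : Fin nZ, ∑ j : Fin nY, |B l.castSucc j.castSucc - B' l.castSucc j.castSucc| := by
        gcongr with i _ l _ l _
        · exact mul_le_of_le_one_right (abs_nonneg _) (hBle l)
        · exact mul_le_of_le_one_left (Finset.sum_nonneg fun j _ => abs_nonneg _) (hA'le l)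
end
end

section
/- With the standing setup for the time-weighted LP trajectory metric, define d̄(X, Y) as the infimum of the objective c(X, Y, W^{1:T}) over all sequences W^{1:T} of (nX+1)×(nY+1) matrices satisfying the relaxed assignment constraints. Then for any three indexed families of trajectories X, Z, Y the triangle inequality holds: d̄(X, Y) ≤ d̄(X, Z) + d̄(Z, Y). -/
open Finset

noncomputable section

/-- A matrix is binary if every entry is `0` or `1`. -/
def IsBinary {m n : ℕ} (W : Matrix (Fin (m + 1)) (Fin (n + 1)) ℝ) : Prop :=
  ∀ i j, W i j = 0 ∨ W i j = 1

/-- Extend an indexed family of trajectories with an extra all-`none` trajectory. -/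
def extTraj {E : Type*} {T n : ℕ} (X : Fin n → Fin T → Option E) :
    Fin (n + 1) → Fin T → Option E :=
  fun i => if h : (i : ℕ) < n then X ⟨i, h⟩ else fun _ => none

/-- The matrix `D^k_{X,Y}(i,j) = dG(X_i(k), Y_j(k))^p` of localisation costs at time `k`. -/
def Dmat {E : Type*} [MetricSpace E] (c p : ℝ) {T nX nY : ℕ}
    (X : Fin nX → Fin T → Option E) (Y : Fin nY → Fin T → Option E) (k : Fin T) :
    Matrix (Fin (nX + 1)) (Fin (nY + 1)) ℝ :=
  fun i j => dG c p (extTraj X i k) (extTraj Y j k) ^ p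

/-- The objective of the time-weighted LP trajectory metric for a sequence of
soft-assignment matrices `W`. -/
def obj {E : Type*} [MetricSpace E] (c p γ : ℝ) (w1 w2 : ℕ → ℝ) {T nX nY : ℕ}
    (X : Fin nX → Fin T → Option E) (Y : Fin nY → Fin T → Option E)
    (W : Fin T → Matrix (Fin (nX + 1)) (Fin (nY + 1)) ℝ) : ℝ :=
  (∑ k : Fin T, w1 k.1 * ∑ i, ∑ j, Dmat c p X Y k i j * W k i j +
      γ ^ p / 2 * ∑ k : Fin (T - 1), w2 k.1 *
        ∑ i : Fin nX, ∑ j : Fin nY,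
          |W ⟨k.1, by have := k.2; omega⟩ i.castSucc j.castSucc -
            W ⟨k.1 + 1, by have := k.2; omega⟩ i.castSucc j.castSucc|) ^ (1 / p)

/-- The time-weighted LP trajectory metric: infimum of the objective over all sequences of
matrices satisfying the relaxed assignment constraints. -/
def dbar {E : Type*} [MetricSpace E] (c p γ : ℝ) (w1 w2 : ℕ → ℝ) {T nX nY : ℕ}
    (X : Fin nX → Fin T → Option E) (Y : Fin nY → Fin T → Option E) : ℝ :=
  ⨅ W : {W : Fin T → Matrix (Fin (nX + 1)) (Fin (nY + 1)) ℝ // ∀ k, Relaxed (W k)},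
    obj c p γ w1 w2 X Y W.1

/-- The time-weighted multi-dimensional assignment metric: infimum of the objective over all
sequences of binary matrices satisfying the relaxed assignment constraints. -/
def dmd {E : Type*} [MetricSpace E] (c p γ : ℝ) (w1 w2 : ℕ → ℝ) {T nX nY : ℕ}
    (X : Fin nX → Fin T → Option E) (Y : Fin nY → Fin T → Option E) : ℝ :=
  ⨅ W : {W : Fin T → Matrix (Fin (nX + 1)) (Fin (nY + 1)) ℝ //
      ∀ k, Relaxed (W k) ∧ IsBinary (W k)},
    obj c p γ w1 w2 X Y W.1


namespace DbarAux

private lemma rpow_aux {p x a : ℝ} (hp : 0 < p) (hx : 0 ≤ x) (ha : 0 ≤ a) :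
    (x ^ (1 / p) * a) ^ p = x * a ^ p := by
  rw [Real.mul_rpow (Real.rpow_nonneg hx _) ha, ← Real.rpow_mul hx,
    one_div_mul_cancel hp.ne', Real.rpow_one]

private lemma min_add {c x y : ℝ} (hc : 0 ≤ c) (hx : 0 ≤ x) (hy : 0 ≤ y) :
    min c (x + y) ≤ min c x + min c y := by
  rcases le_total c x with h | h
  · have : min c x = c := min_eq_left h
    have h2 : 0 ≤ min c y := le_min hc hy
    calc min c (x + y) ≤ c := min_le_left _ _
      _ ≤ min c x + min c y := by rw [this]; linarith
  · rcases le_total c y with h' | h'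
    · have : min c y = c := min_eq_left h'
      have h2 : 0 ≤ min c x := le_min hc hx
      calc min c (x + y) ≤ c := min_le_left _ _
        _ ≤ min c x + min c y := by rw [this]; linarith
    · rw [min_eq_right h, min_eq_right h']
      exact min_le_right _ _

section dGlem
variable {E : Type*} [MetricSpace E] {c p : ℝ}

private lemma dG_nonneg (hc : 0 ≤ c) (hp : 1 ≤ p) (a b : Option E) : 0 ≤ dG c p a b := by
  have h2 : (0:ℝ) < 2 ^ (1/p) := Real.rpow_pos_of_pos (by norm_num) _
  cases a <;> cases b <;> simp only [dG]
  · exact le_rfl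
  · positivity
  · positivity
  · exact le_min hc dist_nonneg

private lemma dG_triangle (hc : 0 < c) (hp : 1 ≤ p) (a b d : Option E) :
    dG c p a d ≤ dG c p a b + dG c p b d := by
  have hp0 : 0 < p := lt_of_lt_of_le one_pos hp
  have h2pos : (0:ℝ) < 2 ^ (1/p) := Real.rpow_pos_of_pos (by norm_num) _
  have h2le : (2:ℝ) ^ (1/p) ≤ 2 := by
    calc (2:ℝ) ^ (1/p) ≤ 2 ^ (1:ℝ) :=
      Real.rpow_le_rpow_of_exponent_le one_le_two ((div_le_one hp0).mpr hp)
    _ = 2 := Real.rpow_one 2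
  have hkey : c ≤ c / 2 ^ (1/p) + c / 2 ^ (1/p) := by
    rw [← add_div, le_div_iff₀ h2pos]
    nlinarith
  have hdiv : 0 ≤ c / 2 ^ (1/p) := by positivity
  cases a <;> cases b <;> cases d <;> simp only [dG]
  · simp
  · simp
  · positivity
  · exact le_add_of_nonneg_right (le_min hc.le dist_nonneg)
  · simp
  · exact le_trans (min_le_left _ _) hkey
  · exact le_add_of_nonneg_left (le_min hc.le dist_nonneg)
  · calc min c (dist _ _) ≤ min c (dist _ _ + dist _ _) :=
        min_le_min le_rfl (dist_triangle _ _ _)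
      _ ≤ _ := min_add hc.le dist_nonneg dist_nonneg

private lemma extTraj_castSucc {T n : ℕ} (X : Fin n → Fin T → Option E) (i : Fin n) :
    extTraj X i.castSucc = X i := by
  simp [extTraj, i.isLt]

private lemma extTraj_last {T n : ℕ} (X : Fin n → Fin T → Option E) :
    extTraj X (Fin.last n) = fun _ => none := by
  simp [extTraj]

end dGlem

/-- The default "all unassigned" relaxed matrix. -/
private def W0 (m n : ℕ) : Matrix (Fin (m + 1)) (Fin (n + 1)) ℝ :=
  fun i j =>
    if i = Fin.last m then (if j = Fin.last n then 0 else 1)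
    else (if j = Fin.last n then 1 else 0)

private lemma relaxed_W0 (m n : ℕ) : Relaxed (W0 m n) := by
  refine ⟨fun i j => ?_, fun j => ?_, fun i => ?_, by simp [W0]⟩
  · unfold W0; split_ifs <;> norm_num
  · have hj : j.castSucc ≠ Fin.last n := (Fin.castSucc_lt_last j).ne
    simp [W0, hj]
  · have hi : i.castSucc ≠ Fin.last m := (Fin.castSucc_lt_last i).ne
    simp [W0, hi]

end DbarAux

namespace DbarAux

variable {nX nZ nY : ℕ}

/-- The pieces of the composed assignment matrix. -/
private def q (A : Matrix (Fin (nX + 1)) (Fin (nZ + 1)) ℝ)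
    (B : Matrix (Fin (nZ + 1)) (Fin (nY + 1)) ℝ)
    (i : Fin (nX + 1)) (j : Fin (nY + 1)) (l : Fin (nZ + 1)) : ℝ :=
  if l = Fin.last nZ then
    (if j = Fin.last nY then A i l else 0) + (if i = Fin.last nX then B l j else 0)
  else A i l * B l j

/-- Composition of relaxed assignment matrices. -/
private def comp (A : Matrix (Fin (nX + 1)) (Fin (nZ + 1)) ℝ)
    (B : Matrix (Fin (nZ + 1)) (Fin (nY + 1)) ℝ) :
    Matrix (Fin (nX + 1)) (Fin (nY + 1)) ℝ :=
  fun i j => if i = Fin.last nX ∧ j = Fin.last nY then 0 else ∑ l, q A B i j l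

private lemma q_nonneg {A : Matrix (Fin (nX + 1)) (Fin (nZ + 1)) ℝ}
    {B : Matrix (Fin (nZ + 1)) (Fin (nY + 1)) ℝ}
    (hA : ∀ i j, 0 ≤ A i j) (hB : ∀ i j, 0 ≤ B i j) (i j l) : 0 ≤ q A B i j l := by
  unfold q; split_ifs <;>
    first
      | exact mul_nonneg (hA _ _) (hB _ _)
      | exact add_nonneg (hA _ _) (hB _ _)
      | exact add_nonneg (hA _ _) le_rfl
      | exact add_nonneg le_rfl (hB _ _)
      | exact add_nonneg le_rfl le_rfl

private lemma comp_le_sum_q {A : Matrix (Fin (nX + 1)) (Fin (nZ + 1)) ℝ}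
    {B : Matrix (Fin (nZ + 1)) (Fin (nY + 1)) ℝ}
    (hA : ∀ i j, 0 ≤ A i j) (hB : ∀ i j, 0 ≤ B i j) (i j) :
    comp A B i j ≤ ∑ l, q A B i j l := by
  unfold comp; split_ifs
  · exact Finset.sum_nonneg fun l _ => q_nonneg hA hB i j l
  · exact le_rfl

private lemma comp_castSucc {A : Matrix (Fin (nX + 1)) (Fin (nZ + 1)) ℝ}
    {B : Matrix (Fin (nZ + 1)) (Fin (nY + 1)) ℝ} (i : Fin nX) (j : Fin nY) :
    comp A B i.castSucc j.castSucc =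
      ∑ l : Fin nZ, A i.castSucc l.castSucc * B l.castSucc j.castSucc := by
  have hi : i.castSucc ≠ Fin.last nX := (Fin.castSucc_lt_last i).ne
  have hj : j.castSucc ≠ Fin.last nY := (Fin.castSucc_lt_last j).ne
  unfold comp
  rw [if_neg (by rintro ⟨h, _⟩; exact hi h), Fin.sum_univ_castSucc]
  simp [q, hi, hj, fun l : Fin nZ => (Fin.castSucc_lt_last l).ne]

private lemma relaxed_comp {A : Matrix (Fin (nX + 1)) (Fin (nZ + 1)) ℝ}
    {B : Matrix (Fin (nZ + 1)) (Fin (nY + 1)) ℝ}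
    (hA : Relaxed A) (hB : Relaxed B) : Relaxed (comp A B) := by
  obtain ⟨hA0, hAc, hAr, hAl⟩ := hA
  obtain ⟨hB0, hBc, hBr, hBl⟩ := hB
  refine ⟨fun i j => ?_, fun j => ?_, fun i => ?_, by simp [comp]⟩
  · unfold comp; split_ifs
    · exact le_rfl
    · exact Finset.sum_nonneg fun l _ => q_nonneg hA0 hB0 i j l
  · -- column sums
    have hj : j.castSucc ≠ Fin.last nY := (Fin.castSucc_lt_last j).ne
    have : ∀ i, comp A B i j.castSucc = ∑ l, q A B i j.castSucc l := by
      intro i; unfold comp; rw [if_neg (by rintro ⟨_, h⟩; exact hj h)]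
    simp only [this]
    rw [Finset.sum_comm]
    have hstep : ∀ l : Fin (nZ + 1), ∑ i, q A B i j.castSucc l =
        B l j.castSucc := by
      intro l
      rcases eq_or_ne l (Fin.last nZ) with rfl | hl
      · simp only [q, if_pos rfl, if_neg hj, zero_add, if_true, eq_self_iff_true]
        rw [Finset.sum_ite_eq' Finset.univ (Fin.last nX) (fun _ => B (Fin.last nZ) j.castSucc)]
        simp
      · obtain ⟨l', rfl⟩ := Fin.exists_castSucc_eq.mpr hl
        simp only [q, if_neg hl, ← Finset.sum_mul, hAc l', one_mul]
    simp only [hstep]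
    exact hBc j
  · -- row sums
    have hi : i.castSucc ≠ Fin.last nX := (Fin.castSucc_lt_last i).ne
    have : ∀ j, comp A B i.castSucc j = ∑ l, q A B i.castSucc j l := by
      intro j; unfold comp; rw [if_neg (by rintro ⟨h, _⟩; exact hi h)]
    simp only [this]
    rw [Finset.sum_comm]
    have hstep : ∀ l : Fin (nZ + 1), ∑ j, q A B i.castSucc j l =
        A i.castSucc l := by
      intro l
      rcases eq_or_ne l (Fin.last nZ) with rfl | hl
      · simp only [q, if_pos rfl, if_neg hi, add_zero, if_true, eq_self_iff_true]
        rw [Finset.sum_ite_eq' Finset.univ (Fin.last nY) (fun _ => A i.castSucc (Fin.last nZ))]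
        simp
      · obtain ⟨l', rfl⟩ := Fin.exists_castSucc_eq.mpr hl
        simp only [q, if_neg hl, ← Finset.mul_sum, hBr l', mul_one]
    simp only [hstep]
    exact hAr i

private lemma abs_mul_sub {a b c d : ℝ} (hb : 0 ≤ b) (hc : 0 ≤ c) :
    |a * b - c * d| ≤ |a - c| * b + c * |b - d| := by
  have h : a * b - c * d = (a - c) * b + c * (b - d) := by ring
  rw [h]
  calc |(a - c) * b + c * (b - d)| ≤ |(a - c) * b| + |c * (b - d)| := abs_add_le _ _
    _ = |a - c| * b + c * |b - d| := by
        rw [abs_mul, abs_mul, abs_of_nonneg hb, abs_of_nonneg hc]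

/-- Weighted discrete Minkowski inequality driver. -/
private lemma minkowski_weighted {ι : Type*} [Fintype ι] {p : ℝ} (hp : 1 ≤ p)
    (m a b : ι → ℝ) (hm : ∀ i, 0 ≤ m i) (ha : ∀ i, 0 ≤ a i) (hb : ∀ i, 0 ≤ b i)
    {SA SB S : ℝ} (hSA : ∑ i, m i * a i ^ p ≤ SA) (hSB : ∑ i, m i * b i ^ p ≤ SB)
    (hS : S ≤ ∑ i, m i * (a i + b i) ^ p) (hS0 : 0 ≤ S) :
    S ^ (1 / p) ≤ SA ^ (1 / p) + SB ^ (1 / p) := by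
  have hp0 : 0 < p := lt_of_lt_of_le one_pos hp
  have hip : (0:ℝ) ≤ 1 / p := by positivity
  have e1 : ∀ i : ι, (m i ^ (1/p) * a i) ^ p = m i * a i ^ p :=
    fun i => rpow_aux hp0 (hm i) (ha i)
  have e2 : ∀ i : ι, (m i ^ (1/p) * b i) ^ p = m i * b i ^ p :=
    fun i => rpow_aux hp0 (hm i) (hb i)
  have hA0 : (0:ℝ) ≤ ∑ i, m i * a i ^ p :=
    Finset.sum_nonneg fun i _ => mul_nonneg (hm i) (Real.rpow_nonneg (ha i) _)
  have hB0 : (0:ℝ) ≤ ∑ i, m i * b i ^ p :=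
    Finset.sum_nonneg fun i _ => mul_nonneg (hm i) (Real.rpow_nonneg (hb i) _)
  calc S ^ (1/p)
      ≤ (∑ i, (m i ^ (1/p) * a i + m i ^ (1/p) * b i) ^ p) ^ (1/p) := by
        apply Real.rpow_le_rpow hS0 _ hip
        refine hS.trans (le_of_eq (Finset.sum_congr rfl fun i _ => ?_))
        rw [← mul_add, rpow_aux hp0 (hm i) (add_nonneg (ha i) (hb i))]
    _ ≤ (∑ i, (m i ^ (1/p) * a i) ^ p) ^ (1/p) + (∑ i, (m i ^ (1/p) * b i) ^ p) ^ (1/p) :=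
        Real.Lp_add_le_of_nonneg _ hp
          (fun i _ => mul_nonneg (Real.rpow_nonneg (hm i) _) (ha i))
          (fun i _ => mul_nonneg (Real.rpow_nonneg (hm i) _) (hb i))
    _ ≤ SA ^ (1/p) + SB ^ (1/p) := by
        apply add_le_add
        · apply Real.rpow_le_rpow _ _ hip
          · rw [Finset.sum_congr rfl fun i _ => e1 i]; exact hA0
          · rw [Finset.sum_congr rfl fun i _ => e1 i]; exact hSA
        · apply Real.rpow_le_rpow _ _ hip
          · rw [Finset.sum_congr rfl fun i _ => e2 i]; exact hB0
          · rw [Finset.sum_congr rfl fun i _ => e2 i]; exact hSB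

end DbarAux

namespace DbarAux

section keys
variable {E : Type*} [MetricSpace E] {T nX nZ nY : ℕ} {c p : ℝ}

private lemma sum_castSucc_le {n : ℕ} {f : Fin (n + 1) → ℝ} (h0 : 0 ≤ f (Fin.last n))
    (h1 : ∑ j, f j = 1) : ∑ j : Fin n, f j.castSucc ≤ 1 := by
  rw [Fin.sum_univ_castSucc] at h1; linarith

private lemma key1 (hp : 1 ≤ p)
    (X : Fin nX → Fin T → Option E) (Z : Fin nZ → Fin T → Option E)
    (W1 : Matrix (Fin (nX + 1)) (Fin (nZ + 1)) ℝ)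
    (W2 : Matrix (Fin (nZ + 1)) (Fin (nY + 1)) ℝ)
    (h2row : ∀ l : Fin nZ, ∑ j, W2 l.castSucc j = 1) (k : Fin T) (i : Fin (nX + 1)) :
    ∑ j : Fin (nY + 1), ∑ l : Fin (nZ + 1),
        q W1 W2 i j l * dG c p (extTraj X i k) (extTraj Z l k) ^ p
      = ∑ l, Dmat c p X Z k i l * W1 i l := by
  have hp0 : 0 < p := lt_of_lt_of_le one_pos hp
  rw [Finset.sum_comm]
  refine Finset.sum_congr rfl fun l _ => ?_
  rcases eq_or_ne l (Fin.last nZ) with rfl | hl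
  · by_cases hi : i = Fin.last nX
    · subst hi
      have ha : dG c p (extTraj X (Fin.last nX) k) (extTraj Z (Fin.last nZ) k) = 0 := by
        rw [extTraj_last, extTraj_last]; rfl
      simp [ha, Real.zero_rpow hp0.ne', Dmat, extTraj_last, dG]
    · have hq : ∀ j, q W1 W2 i j (Fin.last nZ) =
          if j = Fin.last nY then W1 i (Fin.last nZ) else 0 := by
        intro j; simp [q, hi]
      simp only [hq, ite_mul, zero_mul]
      rw [Finset.sum_ite_eq' Finset.univ (Fin.last nY)
        (fun _ => W1 i (Fin.last nZ) * dG c p (extTraj X i k) (extTraj Z (Fin.last nZ) k) ^ p)]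
      simp [Dmat, mul_comm]
  · obtain ⟨l', rfl⟩ := Fin.exists_castSucc_eq.mpr hl
    have hq : ∀ j, q W1 W2 i j l'.castSucc = W1 i l'.castSucc * W2 l'.castSucc j :=
      fun j => if_neg hl
    simp only [hq]
    have : ∑ j, W1 i l'.castSucc * W2 l'.castSucc j *
          dG c p (extTraj X i k) (extTraj Z l'.castSucc k) ^ p
        = W1 i l'.castSucc * dG c p (extTraj X i k) (extTraj Z l'.castSucc k) ^ p *
          ∑ j, W2 l'.castSucc j := by
      rw [Finset.mul_sum]; exact Finset.sum_congr rfl fun j _ => by ring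
    rw [this, h2row l', mul_one, Dmat]
    ring

private lemma key2 (hp : 1 ≤ p)
    (Z : Fin nZ → Fin T → Option E) (Y : Fin nY → Fin T → Option E)
    (W1 : Matrix (Fin (nX + 1)) (Fin (nZ + 1)) ℝ)
    (W2 : Matrix (Fin (nZ + 1)) (Fin (nY + 1)) ℝ)
    (h1col : ∀ l : Fin nZ, ∑ i, W1 i l.castSucc = 1) (k : Fin T) (j : Fin (nY + 1)) :
    ∑ i : Fin (nX + 1), ∑ l : Fin (nZ + 1),
        q W1 W2 i j l * dG c p (extTraj Z l k) (extTraj Y j k) ^ p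
      = ∑ l, Dmat c p Z Y k l j * W2 l j := by
  have hp0 : 0 < p := lt_of_lt_of_le one_pos hp
  rw [Finset.sum_comm]
  refine Finset.sum_congr rfl fun l _ => ?_
  rcases eq_or_ne l (Fin.last nZ) with rfl | hl
  · by_cases hj : j = Fin.last nY
    · subst hj
      have ha : dG c p (extTraj Z (Fin.last nZ) k) (extTraj Y (Fin.last nY) k) = 0 := by
        rw [extTraj_last, extTraj_last]; rfl
      simp [ha, Real.zero_rpow hp0.ne', Dmat, extTraj_last, dG]
    · have hq : ∀ i, q W1 W2 i j (Fin.last nZ) =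
          if i = Fin.last nX then W2 (Fin.last nZ) j else 0 := by
        intro i; simp [q, hj]
      simp only [hq, ite_mul, zero_mul]
      rw [Finset.sum_ite_eq' Finset.univ (Fin.last nX)
        (fun _ => W2 (Fin.last nZ) j * dG c p (extTraj Z (Fin.last nZ) k) (extTraj Y j k) ^ p)]
      simp [Dmat, mul_comm]
  · obtain ⟨l', rfl⟩ := Fin.exists_castSucc_eq.mpr hl
    have hq : ∀ i, q W1 W2 i j l'.castSucc = W1 i l'.castSucc * W2 l'.castSucc j :=
      fun i => if_neg hl
    simp only [hq]
    have : ∑ i, W1 i l'.castSucc * W2 l'.castSucc j *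
          dG c p (extTraj Z l'.castSucc k) (extTraj Y j k) ^ p
        = W2 l'.castSucc j * dG c p (extTraj Z l'.castSucc k) (extTraj Y j k) ^ p *
          ∑ i, W1 i l'.castSucc := by
      rw [Finset.mul_sum]; exact Finset.sum_congr rfl fun i _ => by ring
    rw [this, h1col l', mul_one, Dmat]
    ring

private lemma keyloc (hc : 0 < c) (hp : 1 ≤ p)
    (X : Fin nX → Fin T → Option E) (Z : Fin nZ → Fin T → Option E)
    (Y : Fin nY → Fin T → Option E)
    {W1 : Matrix (Fin (nX + 1)) (Fin (nZ + 1)) ℝ}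
    {W2 : Matrix (Fin (nZ + 1)) (Fin (nY + 1)) ℝ}
    (hA0 : ∀ i j, 0 ≤ W1 i j) (hB0 : ∀ i j, 0 ≤ W2 i j)
    (k : Fin T) (i : Fin (nX + 1)) (j : Fin (nY + 1)) :
    Dmat c p X Y k i j * comp W1 W2 i j ≤
      ∑ l, q W1 W2 i j l *
        (dG c p (extTraj X i k) (extTraj Z l k) + dG c p (extTraj Z l k) (extTraj Y j k)) ^ p := by
  have hp0 : 0 < p := lt_of_lt_of_le one_pos hp
  have hD0 : 0 ≤ Dmat c p X Y k i j := Real.rpow_nonneg (dG_nonneg hc.le hp _ _) p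
  calc Dmat c p X Y k i j * comp W1 W2 i j
      ≤ Dmat c p X Y k i j * ∑ l, q W1 W2 i j l :=
        mul_le_mul_of_nonneg_left (comp_le_sum_q hA0 hB0 i j) hD0
    _ = ∑ l, Dmat c p X Y k i j * q W1 W2 i j l := Finset.mul_sum _ _ _
    _ ≤ _ := by
        refine Finset.sum_le_sum fun l _ => ?_
        rw [mul_comm]
        refine mul_le_mul_of_nonneg_left ?_ (q_nonneg hA0 hB0 i j l)
        refine Real.rpow_le_rpow (dG_nonneg hc.le hp _ _) ?_ hp0.le
        exact dG_triangle hc hp _ _ _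
end keys

end DbarAux

namespace DbarAux

@[reducible] private def fst' {T : ℕ} (k : Fin (T - 1)) : Fin T :=
  ⟨k.1, by have := k.2; omega⟩

@[reducible] private def snd' {T : ℕ} (k : Fin (T - 1)) : Fin T :=
  ⟨k.1 + 1, by have := k.2; omega⟩

section main
variable {E : Type*} [MetricSpace E] {T nX nZ nY : ℕ}

private lemma keymov {A A' : Matrix (Fin (nX + 1)) (Fin (nZ + 1)) ℝ}
    {B B' : Matrix (Fin (nZ + 1)) (Fin (nY + 1)) ℝ}
    (hB0 : ∀ i j, 0 ≤ B i j) (hA'0 : ∀ i j, 0 ≤ A' i j) (i : Fin nX) (j : Fin nY) :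
    |comp A B i.castSucc j.castSucc - comp A' B' i.castSucc j.castSucc| ≤
      ∑ l : Fin nZ,
        (|A i.castSucc l.castSucc - A' i.castSucc l.castSucc| * B l.castSucc j.castSucc
          + A' i.castSucc l.castSucc * |B l.castSucc j.castSucc - B' l.castSucc j.castSucc|) := by
  rw [comp_castSucc, comp_castSucc, ← Finset.sum_sub_distrib]
  refine (Finset.abs_sum_le_sum_abs _ _).trans (Finset.sum_le_sum fun l _ => ?_)
  exact abs_mul_sub (hB0 _ _) (hA'0 _ _)

private def mF (w1 w2 : ℕ → ℝ)
    (W1 : Fin T → Matrix (Fin (nX + 1)) (Fin (nZ + 1)) ℝ)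
    (W2 : Fin T → Matrix (Fin (nZ + 1)) (Fin (nY + 1)) ℝ) :
    (Fin T × Fin (nX + 1) × Fin (nY + 1) × Fin (nZ + 1)) ⊕
      ((Fin (T - 1) × Fin nX × Fin nY × Fin nZ) ⊕ (Fin (T - 1) × Fin nX × Fin nY × Fin nZ)) → ℝ
  | .inl x => w1 x.1.1 * q (W1 x.1) (W2 x.1) x.2.1 x.2.2.1 x.2.2.2
  | .inr (.inl x) => w2 x.1.1 / 2 *
      (|W1 (fst' x.1) x.2.1.castSucc x.2.2.2.castSucc -
          W1 (snd' x.1) x.2.1.castSucc x.2.2.2.castSucc| *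
        W2 (fst' x.1) x.2.2.2.castSucc x.2.2.1.castSucc)
  | .inr (.inr x) => w2 x.1.1 / 2 *
      (W1 (snd' x.1) x.2.1.castSucc x.2.2.2.castSucc *
        |W2 (fst' x.1) x.2.2.2.castSucc x.2.2.1.castSucc -
          W2 (snd' x.1) x.2.2.2.castSucc x.2.2.1.castSucc|)

private def aF (c p γ : ℝ) (X : Fin nX → Fin T → Option E) (Z : Fin nZ → Fin T → Option E) :
    (Fin T × Fin (nX + 1) × Fin (nY + 1) × Fin (nZ + 1)) ⊕
      ((Fin (T - 1) × Fin nX × Fin nY × Fin nZ) ⊕ (Fin (T - 1) × Fin nX × Fin nY × Fin nZ)) → ℝ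
  | .inl x => dG c p (extTraj X x.2.1 x.1) (extTraj Z x.2.2.2 x.1)
  | .inr (.inl _) => γ
  | .inr (.inr _) => 0

private def bF (c p γ : ℝ) (Z : Fin nZ → Fin T → Option E) (Y : Fin nY → Fin T → Option E) :
    (Fin T × Fin (nX + 1) × Fin (nY + 1) × Fin (nZ + 1)) ⊕
      ((Fin (T - 1) × Fin nX × Fin nY × Fin nZ) ⊕ (Fin (T - 1) × Fin nX × Fin nY × Fin nZ)) → ℝ
  | .inl x => dG c p (extTraj Z x.2.2.2 x.1) (extTraj Y x.2.2.1 x.1)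
  | .inr (.inl _) => 0
  | .inr (.inr _) => γ

variable {c p γ : ℝ} {w1 w2 : ℕ → ℝ}

private lemma mF_nonneg (hw1 : ∀ k < T, 0 < w1 k) (hw2 : ∀ k < T - 1, 0 < w2 k)
    {W1 : Fin T → Matrix (Fin (nX + 1)) (Fin (nZ + 1)) ℝ}
    {W2 : Fin T → Matrix (Fin (nZ + 1)) (Fin (nY + 1)) ℝ}
    (h1 : ∀ k, Relaxed (W1 k)) (h2 : ∀ k, Relaxed (W2 k)) :
    ∀ ω, 0 ≤ mF w1 w2 W1 W2 ω := by
  rintro (x | x | x) <;> simp only [mF]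
  · exact mul_nonneg (hw1 _ x.1.2).le (q_nonneg (h1 x.1).1 (h2 x.1).1 _ _ _)
  · exact mul_nonneg (div_nonneg (hw2 _ x.1.2).le (by norm_num))
      (mul_nonneg (abs_nonneg _) ((h2 _).1 _ _))
  · exact mul_nonneg (div_nonneg (hw2 _ x.1.2).le (by norm_num))
      (mul_nonneg ((h1 _).1 _ _) (abs_nonneg _))

private lemma aF_nonneg (hc : 0 < c) (hp : 1 ≤ p) (hγ : 0 < γ)
    (X : Fin nX → Fin T → Option E) (Z : Fin nZ → Fin T → Option E) :
    ∀ ω, 0 ≤ aF (nY := nY) c p γ X Z ω := by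
  rintro (x | x | x) <;> simp only [aF]
  · exact dG_nonneg hc.le hp _ _
  · exact hγ.le
  · exact le_rfl

private lemma bF_nonneg (hc : 0 < c) (hp : 1 ≤ p) (hγ : 0 < γ)
    (Z : Fin nZ → Fin T → Option E) (Y : Fin nY → Fin T → Option E) :
    ∀ ω, 0 ≤ bF (nX := nX) c p γ Z Y ω := by
  rintro (x | x | x) <;> simp only [bF]
  · exact dG_nonneg hc.le hp _ _
  · exact le_rfl
  · exact hγ.le

private lemma inner_nonneg {nA nB : ℕ} (hc : 0 < c) (hp : 1 ≤ p) (hγ : 0 < γ)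
    (hw1 : ∀ k < T, 0 < w1 k) (hw2 : ∀ k < T - 1, 0 < w2 k)
    (X : Fin nA → Fin T → Option E) (Y : Fin nB → Fin T → Option E)
    (W : Fin T → Matrix (Fin (nA + 1)) (Fin (nB + 1)) ℝ)
    (hW : ∀ k i j, 0 ≤ W k i j) :
    0 ≤ (∑ k : Fin T, w1 k.1 * ∑ i, ∑ j, Dmat c p X Y k i j * W k i j) +
      γ ^ p / 2 * ∑ k : Fin (T - 1), w2 k.1 * ∑ i : Fin nA, ∑ j : Fin nB,
        |W (fst' k) i.castSucc j.castSucc - W (snd' k) i.castSucc j.castSucc| := by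
  apply add_nonneg
  · refine Finset.sum_nonneg fun k _ => mul_nonneg (hw1 k.1 k.2).le ?_
    refine Finset.sum_nonneg fun i _ => Finset.sum_nonneg fun j _ => ?_
    exact mul_nonneg (Real.rpow_nonneg (dG_nonneg hc.le hp _ _) p) (hW k i j)
  · refine mul_nonneg (div_nonneg (Real.rpow_nonneg hγ.le p) (by norm_num)) ?_
    refine Finset.sum_nonneg fun k _ => mul_nonneg (hw2 k.1 k.2).le ?_
    exact Finset.sum_nonneg fun i _ => Finset.sum_nonneg fun j _ => abs_nonneg _

private lemma obj_nonneg {nA nB : ℕ} (hc : 0 < c) (hp : 1 ≤ p) (hγ : 0 < γ)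
    (hw1 : ∀ k < T, 0 < w1 k) (hw2 : ∀ k < T - 1, 0 < w2 k)
    (X : Fin nA → Fin T → Option E) (Y : Fin nB → Fin T → Option E)
    (W : Fin T → Matrix (Fin (nA + 1)) (Fin (nB + 1)) ℝ)
    (hW : ∀ k i j, 0 ≤ W k i j) :
    0 ≤ obj c p γ w1 w2 X Y W := by
  unfold obj
  exact Real.rpow_nonneg (inner_nonneg hc hp hγ hw1 hw2 X Y W hW) _

private lemma obj_comp_le (hc : 0 < c) (hp : 1 ≤ p) (hγ : 0 < γ)
    (hw1 : ∀ k < T, 0 < w1 k) (hw2 : ∀ k < T - 1, 0 < w2 k)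
    (X : Fin nX → Fin T → Option E) (Z : Fin nZ → Fin T → Option E)
    (Y : Fin nY → Fin T → Option E)
    (W1 : Fin T → Matrix (Fin (nX + 1)) (Fin (nZ + 1)) ℝ)
    (W2 : Fin T → Matrix (Fin (nZ + 1)) (Fin (nY + 1)) ℝ)
    (h1 : ∀ k, Relaxed (W1 k)) (h2 : ∀ k, Relaxed (W2 k)) :
    obj c p γ w1 w2 X Y (fun k => comp (W1 k) (W2 k)) ≤
      obj c p γ w1 w2 X Z W1 + obj c p γ w1 w2 Z Y W2 := by
  classical
  have hp0 : 0 < p := lt_of_lt_of_le one_pos hp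
  have hγp : (0:ℝ) ≤ γ ^ p := Real.rpow_nonneg hγ.le p
  have hSA : ∑ ω, mF w1 w2 W1 W2 ω * aF c p γ X Z ω ^ p ≤
      (∑ k : Fin T, w1 k.1 * ∑ i, ∑ j, Dmat c p X Z k i j * W1 k i j) +
        γ ^ p / 2 * ∑ k : Fin (T - 1), w2 k.1 * ∑ i : Fin nX, ∑ j : Fin nZ,
          |W1 (fst' k) i.castSucc j.castSucc - W1 (snd' k) i.castSucc j.castSucc| := by
    rw [Fintype.sum_sum_type, Fintype.sum_sum_type]
    have hC : ∑ x : Fin (T - 1) × Fin nX × Fin nY × Fin nZ,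
        mF w1 w2 W1 W2 (.inr (.inr x)) * aF c p γ X Z (.inr (.inr x)) ^ p = 0 := by
      refine Finset.sum_eq_zero fun x _ => ?_
      simp [aF, Real.zero_rpow hp0.ne']
    have hA : ∑ x : Fin T × Fin (nX + 1) × Fin (nY + 1) × Fin (nZ + 1),
        mF w1 w2 W1 W2 (.inl x) * aF c p γ X Z (.inl x) ^ p
        = ∑ k : Fin T, w1 k.1 * ∑ i, ∑ j, Dmat c p X Z k i j * W1 k i j := by
      simp only [mF, aF, Fintype.sum_prod_type]
      refine Finset.sum_congr rfl fun k _ => ?_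
      rw [Finset.mul_sum]
      refine Finset.sum_congr rfl fun i _ => ?_
      calc ∑ j : Fin (nY + 1), ∑ l : Fin (nZ + 1),
            w1 (k:ℕ) * q (W1 k) (W2 k) i j l * dG c p (extTraj X i k) (extTraj Z l k) ^ p
          = w1 (k:ℕ) * ∑ j : Fin (nY + 1), ∑ l : Fin (nZ + 1),
              q (W1 k) (W2 k) i j l * dG c p (extTraj X i k) (extTraj Z l k) ^ p := by
            rw [Finset.mul_sum]
            refine Finset.sum_congr rfl fun j _ => ?_
            rw [Finset.mul_sum]
            exact Finset.sum_congr rfl fun l _ => by ring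
        _ = w1 (k:ℕ) * ∑ l, Dmat c p X Z k i l * W1 k i l := by
            rw [key1 hp X Z (W1 k) (W2 k) (h2 k).2.2.1 k i]
    have hB : ∑ x : Fin (T - 1) × Fin nX × Fin nY × Fin nZ,
        mF w1 w2 W1 W2 (.inr (.inl x)) * aF c p γ X Z (.inr (.inl x)) ^ p
        ≤ γ ^ p / 2 * ∑ k : Fin (T - 1), w2 k.1 * ∑ i : Fin nX, ∑ j : Fin nZ,
            |W1 (fst' k) i.castSucc j.castSucc - W1 (snd' k) i.castSucc j.castSucc| := by
      simp only [mF, aF, Fintype.sum_prod_type]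
      rw [Finset.mul_sum]
      refine Finset.sum_le_sum fun k _ => ?_
      calc ∑ i : Fin nX, ∑ j : Fin nY, ∑ l : Fin nZ,
            w2 (k:ℕ) / 2 *
              (|W1 (fst' k) i.castSucc l.castSucc - W1 (snd' k) i.castSucc l.castSucc| *
                W2 (fst' k) l.castSucc j.castSucc) * γ ^ p
          = ∑ i : Fin nX, ∑ l : Fin nZ,
              (w2 (k:ℕ) / 2 *
                |W1 (fst' k) i.castSucc l.castSucc - W1 (snd' k) i.castSucc l.castSucc| * γ ^ p) *
                ∑ j : Fin nY, W2 (fst' k) l.castSucc j.castSucc := by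
            refine Finset.sum_congr rfl fun i _ => ?_
            conv_lhs => rw [Finset.sum_comm]
            refine Finset.sum_congr rfl fun l _ => ?_
            rw [Finset.mul_sum]
            exact Finset.sum_congr rfl fun j _ => by ring
        _ ≤ ∑ i : Fin nX, ∑ l : Fin nZ, γ ^ p / 2 *
              (w2 (k:ℕ) *
                |W1 (fst' k) i.castSucc l.castSucc - W1 (snd' k) i.castSucc l.castSucc|) := by
            refine Finset.sum_le_sum fun i _ => Finset.sum_le_sum fun l _ => ?_
            have hle : ∑ j : Fin nY, W2 (fst' k) l.castSucc j.castSucc ≤ 1 :=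
              sum_castSucc_le ((h2 _).1 _ _) ((h2 _).2.2.1 l)
            have h0 : 0 ≤ w2 (k:ℕ) / 2 *
                |W1 (fst' k) i.castSucc l.castSucc - W1 (snd' k) i.castSucc l.castSucc| * γ ^ p :=
              mul_nonneg (mul_nonneg (div_nonneg (hw2 k.1 k.2).le (by norm_num))
                (abs_nonneg _)) hγp
            calc _ ≤ (w2 (k:ℕ) / 2 *
                  |W1 (fst' k) i.castSucc l.castSucc - W1 (snd' k) i.castSucc l.castSucc| *
                    γ ^ p) * 1 := mul_le_mul_of_nonneg_left hle h0
              _ = _ := by ring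
        _ = γ ^ p / 2 * (w2 (k:ℕ) * ∑ i : Fin nX, ∑ j : Fin nZ,
              |W1 (fst' k) i.castSucc j.castSucc - W1 (snd' k) i.castSucc j.castSucc|) := by
            simp only [Finset.mul_sum]
    rw [hA, hC, add_zero]
    exact add_le_add le_rfl hB
  have hSB : ∑ ω, mF w1 w2 W1 W2 ω * bF c p γ Z Y ω ^ p ≤
      (∑ k : Fin T, w1 k.1 * ∑ i, ∑ j, Dmat c p Z Y k i j * W2 k i j) +
        γ ^ p / 2 * ∑ k : Fin (T - 1), w2 k.1 * ∑ i : Fin nZ, ∑ j : Fin nY,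
          |W2 (fst' k) i.castSucc j.castSucc - W2 (snd' k) i.castSucc j.castSucc| := by
    rw [Fintype.sum_sum_type, Fintype.sum_sum_type]
    have hBz : ∑ x : Fin (T - 1) × Fin nX × Fin nY × Fin nZ,
        mF w1 w2 W1 W2 (.inr (.inl x)) * bF c p γ Z Y (.inr (.inl x)) ^ p = 0 := by
      refine Finset.sum_eq_zero fun x _ => ?_
      simp [bF, Real.zero_rpow hp0.ne']
    have hA : ∑ x : Fin T × Fin (nX + 1) × Fin (nY + 1) × Fin (nZ + 1),
        mF w1 w2 W1 W2 (.inl x) * bF c p γ Z Y (.inl x) ^ p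
        = ∑ k : Fin T, w1 k.1 * ∑ i, ∑ j, Dmat c p Z Y k i j * W2 k i j := by
      simp only [mF, bF, Fintype.sum_prod_type]
      refine Finset.sum_congr rfl fun k _ => ?_
      calc ∑ i : Fin (nX + 1), ∑ j : Fin (nY + 1), ∑ l : Fin (nZ + 1),
            w1 (k:ℕ) * q (W1 k) (W2 k) i j l * dG c p (extTraj Z l k) (extTraj Y j k) ^ p
          = ∑ j : Fin (nY + 1), ∑ i : Fin (nX + 1), ∑ l : Fin (nZ + 1),
              w1 (k:ℕ) * q (W1 k) (W2 k) i j l * dG c p (extTraj Z l k) (extTraj Y j k) ^ p :=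
            Finset.sum_comm
        _ = w1 (k:ℕ) * ∑ j : Fin (nY + 1), ∑ i : Fin (nX + 1), ∑ l : Fin (nZ + 1),
              q (W1 k) (W2 k) i j l * dG c p (extTraj Z l k) (extTraj Y j k) ^ p := by
            rw [Finset.mul_sum]
            refine Finset.sum_congr rfl fun j _ => ?_
            rw [Finset.mul_sum]
            refine Finset.sum_congr rfl fun i _ => ?_
            rw [Finset.mul_sum]
            exact Finset.sum_congr rfl fun l _ => by ring
        _ = w1 (k:ℕ) * ∑ j : Fin (nY + 1), ∑ l : Fin (nZ + 1),
              Dmat c p Z Y k l j * W2 k l j := by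
            congr 1
            exact Finset.sum_congr rfl fun j _ =>
              key2 hp Z Y (W1 k) (W2 k) (h1 k).2.1 k j
        _ = w1 (k:ℕ) * ∑ i, ∑ j, Dmat c p Z Y k i j * W2 k i j := by
            congr 1
            exact Finset.sum_comm
    have hCle : ∑ x : Fin (T - 1) × Fin nX × Fin nY × Fin nZ,
        mF w1 w2 W1 W2 (.inr (.inr x)) * bF c p γ Z Y (.inr (.inr x)) ^ p
        ≤ γ ^ p / 2 * ∑ k : Fin (T - 1), w2 k.1 * ∑ i : Fin nZ, ∑ j : Fin nY,
            |W2 (fst' k) i.castSucc j.castSucc - W2 (snd' k) i.castSucc j.castSucc| := by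
      simp only [mF, bF, Fintype.sum_prod_type]
      rw [Finset.mul_sum]
      refine Finset.sum_le_sum fun k _ => ?_
      calc ∑ i : Fin nX, ∑ j : Fin nY, ∑ l : Fin nZ,
            w2 (k:ℕ) / 2 *
              (W1 (snd' k) i.castSucc l.castSucc *
                |W2 (fst' k) l.castSucc j.castSucc - W2 (snd' k) l.castSucc j.castSucc|) * γ ^ p
          = ∑ j : Fin nY, ∑ i : Fin nX, ∑ l : Fin nZ,
            w2 (k:ℕ) / 2 *
              (W1 (snd' k) i.castSucc l.castSucc *
                |W2 (fst' k) l.castSucc j.castSucc - W2 (snd' k) l.castSucc j.castSucc|) * γ ^ p :=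
            Finset.sum_comm
        _ = ∑ j : Fin nY, ∑ l : Fin nZ,
              (w2 (k:ℕ) / 2 *
                |W2 (fst' k) l.castSucc j.castSucc - W2 (snd' k) l.castSucc j.castSucc| * γ ^ p) *
                ∑ i : Fin nX, W1 (snd' k) i.castSucc l.castSucc := by
            refine Finset.sum_congr rfl fun j _ => ?_
            conv_lhs => rw [Finset.sum_comm]
            refine Finset.sum_congr rfl fun l _ => ?_
            rw [Finset.mul_sum]
            exact Finset.sum_congr rfl fun i _ => by ring
        _ ≤ ∑ j : Fin nY, ∑ l : Fin nZ, γ ^ p / 2 *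
              (w2 (k:ℕ) *
                |W2 (fst' k) l.castSucc j.castSucc - W2 (snd' k) l.castSucc j.castSucc|) := by
            refine Finset.sum_le_sum fun j _ => Finset.sum_le_sum fun l _ => ?_
            have hle : ∑ i : Fin nX, W1 (snd' k) i.castSucc l.castSucc ≤ 1 :=
              sum_castSucc_le (f := fun i => W1 (snd' k) i l.castSucc)
                ((h1 _).1 _ _) ((h1 _).2.1 l)
            have h0 : 0 ≤ w2 (k:ℕ) / 2 *
                |W2 (fst' k) l.castSucc j.castSucc - W2 (snd' k) l.castSucc j.castSucc| * γ ^ p :=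
              mul_nonneg (mul_nonneg (div_nonneg (hw2 k.1 k.2).le (by norm_num))
                (abs_nonneg _)) hγp
            calc _ ≤ (w2 (k:ℕ) / 2 *
                  |W2 (fst' k) l.castSucc j.castSucc - W2 (snd' k) l.castSucc j.castSucc| *
                    γ ^ p) * 1 := mul_le_mul_of_nonneg_left hle h0
              _ = _ := by ring
        _ = γ ^ p / 2 * (w2 (k:ℕ) * ∑ i : Fin nZ, ∑ j : Fin nY,
              |W2 (fst' k) i.castSucc j.castSucc - W2 (snd' k) i.castSucc j.castSucc|) := by
            conv_lhs => rw [Finset.sum_comm]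
            simp only [Finset.mul_sum]
    rw [hA, hBz, zero_add]
    exact add_le_add le_rfl hCle
  have hS : (∑ k : Fin T, w1 k.1 * ∑ i, ∑ j,
        Dmat c p X Y k i j * comp (W1 k) (W2 k) i j) +
      γ ^ p / 2 * ∑ k : Fin (T - 1), w2 k.1 * ∑ i : Fin nX, ∑ j : Fin nY,
        |comp (W1 (fst' k)) (W2 (fst' k)) i.castSucc j.castSucc -
          comp (W1 (snd' k)) (W2 (snd' k)) i.castSucc j.castSucc|
      ≤ ∑ ω, mF w1 w2 W1 W2 ω * (aF c p γ X Z ω + bF c p γ Z Y ω) ^ p := by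
    rw [Fintype.sum_sum_type, Fintype.sum_sum_type]
    refine add_le_add ?_ ?_
    · simp only [mF, aF, bF, Fintype.sum_prod_type]
      refine Finset.sum_le_sum fun k _ => ?_
      rw [Finset.mul_sum]
      refine Finset.sum_le_sum fun i _ => ?_
      rw [Finset.mul_sum]
      refine Finset.sum_le_sum fun j _ => ?_
      calc w1 (k:ℕ) * (Dmat c p X Y k i j * comp (W1 k) (W2 k) i j)
          ≤ w1 (k:ℕ) * ∑ l, q (W1 k) (W2 k) i j l *
              (dG c p (extTraj X i k) (extTraj Z l k) +
                dG c p (extTraj Z l k) (extTraj Y j k)) ^ p :=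
            mul_le_mul_of_nonneg_left (keyloc hc hp X Z Y (h1 k).1 (h2 k).1 k i j)
              (hw1 k.1 k.2).le
        _ = ∑ l, w1 (k:ℕ) * q (W1 k) (W2 k) i j l *
              (dG c p (extTraj X i k) (extTraj Z l k) +
                dG c p (extTraj Z l k) (extTraj Y j k)) ^ p := by
            rw [Finset.mul_sum]
            exact Finset.sum_congr rfl fun l _ => by ring
    · simp only [mF, aF, bF, Fintype.sum_prod_type, add_zero, zero_add]
      have hR : ∀ (B C : Fin nX → Fin nY → Fin nZ → ℝ),
          (∑ i, ∑ j, ∑ l, B i j l) + (∑ i, ∑ j, ∑ l, C i j l)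
            = ∑ i, ∑ j, ∑ l, (B i j l + C i j l) := by
        intro B C
        rw [← Finset.sum_add_distrib]
        refine Finset.sum_congr rfl fun i _ => ?_
        rw [← Finset.sum_add_distrib]
        refine Finset.sum_congr rfl fun j _ => ?_
        rw [← Finset.sum_add_distrib]
      rw [← Finset.sum_add_distrib, Finset.mul_sum]
      refine Finset.sum_le_sum fun k _ => ?_
      rw [hR]
      calc γ ^ p / 2 * (w2 (k:ℕ) * ∑ i : Fin nX, ∑ j : Fin nY,
            |comp (W1 (fst' k)) (W2 (fst' k)) i.castSucc j.castSucc -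
              comp (W1 (snd' k)) (W2 (snd' k)) i.castSucc j.castSucc|)
          = ∑ i : Fin nX, ∑ j : Fin nY, γ ^ p / 2 * (w2 (k:ℕ) *
              |comp (W1 (fst' k)) (W2 (fst' k)) i.castSucc j.castSucc -
                comp (W1 (snd' k)) (W2 (snd' k)) i.castSucc j.castSucc|) := by
            simp only [Finset.mul_sum]
        _ ≤ _ := by
            refine Finset.sum_le_sum fun i _ => Finset.sum_le_sum fun j _ => ?_
            have hmv := keymov (A := W1 (fst' k)) (A' := W1 (snd' k))
              (B := W2 (fst' k)) (B' := W2 (snd' k))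
              (h2 (fst' k)).1 (h1 (snd' k)).1 i j
            have hnn : (0:ℝ) ≤ γ ^ p * (w2 (k:ℕ) / 2) :=
              mul_nonneg hγp (by have := hw2 k.1 k.2; linarith)
            calc γ ^ p / 2 * (w2 (k:ℕ) *
                  |comp (W1 (fst' k)) (W2 (fst' k)) i.castSucc j.castSucc -
                    comp (W1 (snd' k)) (W2 (snd' k)) i.castSucc j.castSucc|)
                = γ ^ p * (w2 (k:ℕ) / 2) *
                  |comp (W1 (fst' k)) (W2 (fst' k)) i.castSucc j.castSucc -
                    comp (W1 (snd' k)) (W2 (snd' k)) i.castSucc j.castSucc| := by ring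
              _ ≤ γ ^ p * (w2 (k:ℕ) / 2) * ∑ l : Fin nZ,
                  (|W1 (fst' k) i.castSucc l.castSucc - W1 (snd' k) i.castSucc l.castSucc| *
                      W2 (fst' k) l.castSucc j.castSucc
                    + W1 (snd' k) i.castSucc l.castSucc *
                      |W2 (fst' k) l.castSucc j.castSucc - W2 (snd' k) l.castSucc j.castSucc|) :=
                mul_le_mul_of_nonneg_left hmv hnn
              _ = ∑ l : Fin nZ,
                  (w2 (k:ℕ) / 2 *
                      (|W1 (fst' k) i.castSucc l.castSucc - W1 (snd' k) i.castSucc l.castSucc| *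
                        W2 (fst' k) l.castSucc j.castSucc) * γ ^ p
                    + w2 (k:ℕ) / 2 *
                      (W1 (snd' k) i.castSucc l.castSucc *
                        |W2 (fst' k) l.castSucc j.castSucc -
                          W2 (snd' k) l.castSucc j.castSucc|) * γ ^ p) := by
                rw [Finset.mul_sum]
                exact Finset.sum_congr rfl fun l _ => by ring
  have hS0 : 0 ≤ (∑ k : Fin T, w1 k.1 * ∑ i, ∑ j,
        Dmat c p X Y k i j * comp (W1 k) (W2 k) i j) +
      γ ^ p / 2 * ∑ k : Fin (T - 1), w2 k.1 * ∑ i : Fin nX, ∑ j : Fin nY,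
        |comp (W1 (fst' k)) (W2 (fst' k)) i.castSucc j.castSucc -
          comp (W1 (snd' k)) (W2 (snd' k)) i.castSucc j.castSucc| :=
    inner_nonneg hc hp hγ hw1 hw2 X Y (fun k => comp (W1 k) (W2 k))
      (fun k => (relaxed_comp (h1 k) (h2 k)).1)
  exact minkowski_weighted hp (mF w1 w2 W1 W2) (aF c p γ X Z) (bF c p γ Z Y)
    (mF_nonneg hw1 hw2 h1 h2) (aF_nonneg hc hp hγ X Z) (bF_nonneg hc hp hγ Z Y)
    hSA hSB hS hS0

end main
end DbarAux

/-- The time-weighted LP trajectory metric satisfies the triangle inequality. -/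
theorem dbar_triangle {E : Type*} [MetricSpace E] {T nX nZ nY : ℕ}
    (c p γ : ℝ) (hc : 0 < c) (hp : 1 ≤ p) (hγ : 0 < γ)
    (w1 w2 : ℕ → ℝ) (hw1 : ∀ k < T, 0 < w1 k) (hw2 : ∀ k < T - 1, 0 < w2 k)
    (X : Fin nX → Fin T → Option E) (Z : Fin nZ → Fin T → Option E)
    (Y : Fin nY → Fin T → Option E) :
    dbar c p γ w1 w2 X Y ≤ dbar c p γ w1 w2 X Z + dbar c p γ w1 w2 Z Y := by
  classical
  haveI h1 : Nonempty {W : Fin T → Matrix (Fin (nX + 1)) (Fin (nZ + 1)) ℝ //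
      ∀ k, Relaxed (W k)} := ⟨⟨fun _ => DbarAux.W0 nX nZ, fun _ => DbarAux.relaxed_W0 nX nZ⟩⟩
  haveI h2 : Nonempty {W : Fin T → Matrix (Fin (nZ + 1)) (Fin (nY + 1)) ℝ //
      ∀ k, Relaxed (W k)} := ⟨⟨fun _ => DbarAux.W0 nZ nY, fun _ => DbarAux.relaxed_W0 nZ nY⟩⟩
  rw [dbar, dbar, dbar]
  refine le_ciInf_add_ciInf fun Wa Wb => ?_
  have hWc : ∀ k, Relaxed (DbarAux.comp (Wa.1 k) (Wb.1 k)) :=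
    fun k => DbarAux.relaxed_comp (Wa.2 k) (Wb.2 k)
  have hbdd : BddBelow (Set.range fun (W : {W : Fin T → Matrix (Fin (nX + 1)) (Fin (nY + 1)) ℝ //
      ∀ k, Relaxed (W k)}) => obj c p γ w1 w2 X Y W.1) := by
    refine ⟨0, ?_⟩
    rintro x ⟨W, rfl⟩
    exact DbarAux.obj_nonneg hc hp hγ hw1 hw2 X Y W.1 fun k => (W.2 k).1
  calc (⨅ W : {W : Fin T → Matrix (Fin (nX + 1)) (Fin (nY + 1)) ℝ // ∀ k, Relaxed (W k)},
        obj c p γ w1 w2 X Y W.1)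
      ≤ obj c p γ w1 w2 X Y (fun k => DbarAux.comp (Wa.1 k) (Wb.1 k)) :=
        ciInf_le hbdd ⟨_, hWc⟩
    _ ≤ obj c p γ w1 w2 X Z Wa.1 + obj c p γ w1 w2 Z Y Wb.1 :=
        DbarAux.obj_comp_le hc hp hγ hw1 hw2 X Z Y Wa.1 Wb.1 Wa.2 Wb.2
end
end

section
/- With the standing setup for the time-weighted LP trajectory metric, assume in addition that every trajectory in the families X and Y is nonempty (i.e., for every i there exists a time k with X_i(k) ≠ none, and likewise for Y), and that the maps i ↦ X_i and j ↦ Y_j are injective. Then d̄(X, Y) = 0 if and only if nX = nY and the sets of trajectories coincide, i.e., {X_1, …, X_nX} = {Y_1, …, Y_nY} (equivalently, there is a bijection σ of the index sets with Y_{σ(i)} = X_i for all i). -/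
open Finset

noncomputable section

/-!
The feasible plans form a compact set on which the objective is continuous, so `dbar` is
attained. A plan of cost zero only pairs entries at base distance zero and, on the block of real
trajectories, does not change in time. A trajectory `X i` that is present at time `k₀` cannot
send its mass to the dummy column there, so some `W k₀ i j` with `j` real is positive; the plan
being constant in time, it is positive at every time, which forces `X i = Y j`. The same applies
to the transposed plan, and injectivity turns the two inclusions of ranges into a bijection.
Conversely, the permutation plan of a bijection has cost zero.
-/

theorem apply_eq_apply_of_adjacent_eq {α : Type*} {T : ℕ} {f : Fin T → α}
    (h : ∀ k : Fin (T - 1), f ⟨k, by omega⟩ = f ⟨k + 1, by omega⟩) (a b : Fin T) :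
    f a = f b := by
  suffices hzero : ∀ n (hn : n < T), f ⟨n, hn⟩ = f ⟨0, by omega⟩ from
    (hzero a a.2).trans (hzero b b.2).symm
  intro n hn
  induction n with
  | zero => rfl
  | succ n ih => rw [← h ⟨n, by omega⟩, ih]

theorem Function.Injective.exists_equiv_of_range_eq {α β γ : Type*} {f : α → γ} {g : β → γ}
    (hf : f.Injective) (hg : g.Injective) (h : Set.range f = Set.range g) :
    ∃ σ : α ≃ β, ∀ a, g (σ a) = f a :=
  ⟨(Equiv.ofInjective f hf).trans ((Equiv.setCongr h).trans (Equiv.ofInjective g hg).symm),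
    fun a => by simp [Equiv.apply_ofInjective_symm]⟩

section BaseDistance

variable {E : Type*} [MetricSpace E] {c p : ℝ}

theorem dG_comm (a b : Option E) : dG c p a b = dG c p b a := by
  cases a <;> cases b <;> simp [dG, dist_comm]

theorem dG_nonneg (hc : 0 ≤ c) (a b : Option E) : 0 ≤ dG c p a b := by
  cases a <;> cases b <;> simp only [dG] <;> positivity

theorem dG_eq_zero_iff (hc : 0 < c) {a b : Option E} : dG c p a b = 0 ↔ a = b := by
  have hmixed : c / 2 ^ (1 / p) ≠ 0 := by positivity
  rcases a with _ | x <;> rcases b with _ | y <;> simp only [dG, hmixed, reduceCtorEq]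
  rw [Option.some_inj, ← dist_eq_zero (x := x)]
  rcases min_choice c (dist x y) with h | h <;> rw [h]
  exact iff_of_false hc.ne' (hc.trans_le (h ▸ min_le_right c (dist x y))).ne'

theorem dG_rpow_eq_zero_iff (hc : 0 < c) (hp : p ≠ 0) {a b : Option E} :
    dG c p a b ^ p = 0 ↔ a = b := by
  rw [Real.rpow_eq_zero (dG_nonneg hc.le a b) hp, dG_eq_zero_iff hc]

end BaseDistance

section CostMatrix

variable {E : Type*} [MetricSpace E] {c p : ℝ} {T nX nY : ℕ}
  (X : Fin nX → Fin T → Option E) (Y : Fin nY → Fin T → Option E)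

theorem Dmat_castSucc_castSucc (k : Fin T) (i : Fin nX) (j : Fin nY) :
    Dmat c p X Y k i.castSucc j.castSucc = dG c p (X i k) (Y j k) ^ p := by
  simp [Dmat, extTraj]

theorem Dmat_castSucc_last (k : Fin T) (i : Fin nX) :
    Dmat c p X Y k i.castSucc (Fin.last nY) = dG c p (X i k) none ^ p := by
  simp [Dmat, extTraj]

open Matrix in
theorem Dmat_transpose (k : Fin T) : (Dmat c p X Y k)ᵀ = Dmat c p Y X k := by
  ext j i
  simp [Dmat, dG_comm]

end CostMatrix

section Plans

variable {m n : ℕ}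

open Matrix in
theorem Relaxed.transpose {m n : ℕ} {A : Matrix (Fin (m + 1)) (Fin (n + 1)) ℝ}
    (h : Relaxed A) : Relaxed Aᵀ :=
  ⟨fun i j => h.1 j i, h.2.2.1, h.2.1, h.2.2.2⟩

theorem Relaxed.le_one {A : Matrix (Fin (m + 1)) (Fin (n + 1)) ℝ} (h : Relaxed A) (i j) :
    A i j ≤ 1 := by
  induction i using Fin.lastCases with
  | cast i => exact h.2.2.1 i ▸ single_le_sum (fun j _ => h.1 _ j) (mem_univ j)
  | last =>
    induction j using Fin.lastCases with
    | cast j => exact h.2.1 j ▸ single_le_sum (fun i _ => h.1 i _) (mem_univ _)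
    | last => exact h.2.2.2.le.trans zero_le_one

theorem isClosed_setOf_relaxed :
    IsClosed {A : Matrix (Fin (m + 1)) (Fin (n + 1)) ℝ | Relaxed A} := by
  simp only [Relaxed, Set.ofPred_and, Set.ofPred_forall]
  refine .inter (isClosed_iInter fun i => isClosed_iInter fun j => isClosed_le continuous_const ?_)
    (.inter (isClosed_iInter fun j => isClosed_eq ?_ continuous_const)
      (.inter (isClosed_iInter fun i => isClosed_eq ?_ continuous_const)
        (isClosed_eq ?_ continuous_const)))
  all_goals fun_prop

theorem isCompact_setOf_relaxed :
    IsCompact {A : Matrix (Fin (m + 1)) (Fin (n + 1)) ℝ | Relaxed A} := by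
  refine (isCompact_univ_pi fun _ => isCompact_univ_pi fun _ => isCompact_Icc (a := (0 : ℝ))
    (b := 1)).of_isClosed_subset isClosed_setOf_relaxed fun A hA => ?_
  simp only [Set.mem_pi, Set.mem_univ, true_implies, Set.mem_Icc]
  exact fun i j => ⟨hA.1 i j, hA.le_one i j⟩

theorem isCompact_setOf_forall_relaxed {T : ℕ} :
    IsCompact {W : Fin T → Matrix (Fin (m + 1)) (Fin (n + 1)) ℝ | ∀ k, Relaxed (W k)} := by
  convert isCompact_univ_pi fun _ : Fin T => isCompact_setOf_relaxed (m := m) (n := n) using 1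
  ext W
  simp

def unassignedMatrix (m n : ℕ) : Matrix (Fin (m + 1)) (Fin (n + 1)) ℝ :=
  fun i j =>
    Fin.lastCases (Fin.lastCases 0 (fun _ => 1) j) (fun _ => Fin.lastCases 1 (fun _ => 0) j) i

def assignMatrix (σ : Fin m ≃ Fin n) : Matrix (Fin (m + 1)) (Fin (n + 1)) ℝ :=
  fun i j =>
    Fin.lastCases 0 (fun i₀ => Fin.lastCases 0 (fun j₀ => if σ i₀ = j₀ then 1 else 0) j) i

theorem relaxed_unassignedMatrix : Relaxed (unassignedMatrix m n) := by
  refine ⟨fun i j => ?_, fun j => ?_, fun i => ?_, ?_⟩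
  · induction i using Fin.lastCases <;> induction j using Fin.lastCases <;> simp [unassignedMatrix]
  all_goals simp [unassignedMatrix, Fin.sum_univ_castSucc]

theorem relaxed_assignMatrix (σ : Fin m ≃ Fin n) : Relaxed (assignMatrix σ) := by
  refine ⟨fun i j => ?_, fun j => ?_, fun i => ?_, ?_⟩
  · induction i using Fin.lastCases <;> induction j using Fin.lastCases <;> simp [assignMatrix]
    split_ifs <;> norm_num
  · simp [assignMatrix, Fin.sum_univ_castSucc, ← Equiv.eq_symm_apply]
  all_goals simp [assignMatrix, Fin.sum_univ_castSucc]

end Plans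

section Objective

variable {E : Type*} [MetricSpace E] {c p γ : ℝ} {w1 w2 : ℕ → ℝ} {T nX nY : ℕ}
  {X : Fin nX → Fin T → Option E} {Y : Fin nY → Fin T → Option E}
  {W : Fin T → Matrix (Fin (nX + 1)) (Fin (nY + 1)) ℝ}

def locCost (c p : ℝ) (w1 : ℕ → ℝ) (X : Fin nX → Fin T → Option E)
    (Y : Fin nY → Fin T → Option E) (W : Fin T → Matrix (Fin (nX + 1)) (Fin (nY + 1)) ℝ) :
    ℝ :=
  ∑ k : Fin T, w1 k.1 * ∑ i, ∑ j, Dmat c p X Y k i j * W k i j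

def switchCost (w2 : ℕ → ℝ) (W : Fin T → Matrix (Fin (nX + 1)) (Fin (nY + 1)) ℝ) : ℝ :=
  ∑ k : Fin (T - 1), w2 k.1 *
    ∑ i : Fin nX, ∑ j : Fin nY,
      |W ⟨k.1, by have := k.2; omega⟩ i.castSucc j.castSucc -
        W ⟨k.1 + 1, by have := k.2; omega⟩ i.castSucc j.castSucc|

theorem obj_eq_rpow :
    obj c p γ w1 w2 X Y W = (locCost c p w1 X Y W + γ ^ p / 2 * switchCost w2 W) ^ (1 / p) :=
  rfl

theorem locCost_nonneg (hc : 0 ≤ c) (hw1 : ∀ k < T, 0 ≤ w1 k) (hW : ∀ k, Relaxed (W k)) :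
    0 ≤ locCost c p w1 X Y W :=
  sum_nonneg fun k _ => mul_nonneg (hw1 k k.2) <| sum_nonneg fun i _ => sum_nonneg fun j _ =>
    mul_nonneg (Real.rpow_nonneg (dG_nonneg hc _ _) p) ((hW k).1 i j)

theorem switchCost_nonneg (hw2 : ∀ k < T - 1, 0 ≤ w2 k) : 0 ≤ switchCost w2 W :=
  sum_nonneg fun k _ => mul_nonneg (hw2 k k.2) <| sum_nonneg fun _ _ => sum_nonneg fun _ _ =>
    abs_nonneg _

theorem locCost_eq_zero_iff (hc : 0 ≤ c) (hw1 : ∀ k < T, 0 < w1 k)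
    (hW : ∀ k, Relaxed (W k)) :
    locCost c p w1 X Y W = 0 ↔ ∀ k i j, Dmat c p X Y k i j * W k i j = 0 := by
  have hterm : ∀ k i j, 0 ≤ Dmat c p X Y k i j * W k i j := fun k i j =>
    mul_nonneg (Real.rpow_nonneg (dG_nonneg hc _ _) p) ((hW k).1 i j)
  rw [locCost, sum_eq_zero_iff_of_nonneg fun (k : Fin _) _ =>
    mul_nonneg (hw1 k k.2).le (sum_nonneg fun i _ => sum_nonneg fun j _ => hterm k i j)]
  simp only [mem_univ, true_implies, mul_eq_zero, (hw1 _ (Fin.is_lt _)).ne', false_or,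
    sum_eq_zero_iff_of_nonneg, sum_nonneg, hterm, implies_true]

theorem switchCost_eq_zero_iff (hw2 : ∀ k < T - 1, 0 < w2 k) :
    switchCost w2 W = 0 ↔ ∀ (k : Fin (T - 1)) (i : Fin nX) (j : Fin nY),
      W ⟨k.1, by have := k.2; omega⟩ i.castSucc j.castSucc =
        W ⟨k.1 + 1, by have := k.2; omega⟩ i.castSucc j.castSucc := by
  rw [switchCost, sum_eq_zero_iff_of_nonneg fun (k : Fin _) _ => mul_nonneg (hw2 k k.2).le
    (sum_nonneg fun i _ => sum_nonneg fun j _ => abs_nonneg _)]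
  simp only [mem_univ, true_implies, mul_eq_zero, (hw2 _ (Fin.is_lt _)).ne', false_or,
    sum_eq_zero_iff_of_nonneg, sum_nonneg, abs_nonneg, implies_true, abs_eq_zero, sub_eq_zero]

theorem obj_nonneg (hc : 0 ≤ c) (hγ : 0 ≤ γ) (hw1 : ∀ k < T, 0 ≤ w1 k)
    (hw2 : ∀ k < T - 1, 0 ≤ w2 k) (hW : ∀ k, Relaxed (W k)) : 0 ≤ obj c p γ w1 w2 X Y W :=
  Real.rpow_nonneg (add_nonneg (locCost_nonneg hc hw1 hW) <|
    mul_nonneg (by positivity) (switchCost_nonneg hw2)) _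

theorem obj_eq_zero_iff (hc : 0 ≤ c) (hp : p ≠ 0) (hγ : 0 < γ) (hw1 : ∀ k < T, 0 < w1 k)
    (hw2 : ∀ k < T - 1, 0 < w2 k) (hW : ∀ k, Relaxed (W k)) :
    obj c p γ w1 w2 X Y W = 0 ↔ (∀ k i j, Dmat c p X Y k i j * W k i j = 0) ∧
      ∀ (k : Fin (T - 1)) (i : Fin nX) (j : Fin nY),
        W ⟨k.1, by have := k.2; omega⟩ i.castSucc j.castSucc =
          W ⟨k.1 + 1, by have := k.2; omega⟩ i.castSucc j.castSucc := by
  have hloc := locCost_nonneg (p := p) (X := X) (Y := Y) hc (fun k hk => (hw1 k hk).le) hW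
  have hswitch := switchCost_nonneg (W := W) fun k hk => (hw2 k hk).le
  have hγp : 0 < γ ^ p / 2 := by positivity
  rw [obj_eq_rpow, Real.rpow_eq_zero (by positivity) (one_div_ne_zero hp),
    add_eq_zero_iff_of_nonneg hloc (by positivity), mul_eq_zero, or_iff_right hγp.ne',
    locCost_eq_zero_iff hc hw1 hW, switchCost_eq_zero_iff hw2]

open Matrix in
theorem obj_transpose :
    obj c p γ w1 w2 Y X (fun k => (W k)ᵀ) = obj c p γ w1 w2 X Y W := by
  have hloc : locCost c p w1 Y X (fun k => (W k)ᵀ) = locCost c p w1 X Y W := by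
    simp only [locCost, ← Dmat_transpose X Y, transpose_apply]
    exact sum_congr rfl fun k _ => congrArg _ sum_comm
  have hswitch : switchCost w2 (fun k => (W k)ᵀ) = switchCost w2 W := by
    simp only [switchCost, transpose_apply]
    exact sum_congr rfl fun k _ => congrArg _ sum_comm
  rw [obj_eq_rpow, obj_eq_rpow, hloc, hswitch]

theorem continuous_obj (hp : 0 ≤ p) : Continuous (obj c p γ w1 w2 X Y) := by
  refine (Real.continuous_rpow_const (one_div_nonneg.2 hp)).comp
    (f := fun W => locCost c p w1 X Y W + γ ^ p / 2 * switchCost w2 W) ?_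
  unfold locCost switchCost
  fun_prop

theorem exists_isMinOn_obj (hp : 0 ≤ p) :
    ∃ W ∈ {W | ∀ k, Relaxed (W k)}, IsMinOn (obj c p γ w1 w2 X Y) {W | ∀ k, Relaxed (W k)} W :=
  isCompact_setOf_forall_relaxed.exists_isMinOn ⟨_, fun _ => relaxed_unassignedMatrix⟩
    (continuous_obj hp).continuousOn

theorem dbar_eq_obj_of_isMinOn (hW : ∀ k, Relaxed (W k))
    (hmin : IsMinOn (obj c p γ w1 w2 X Y) {W | ∀ k, Relaxed (W k)} W) :
    dbar c p γ w1 w2 X Y = obj c p γ w1 w2 X Y W := by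
  have hle : ∀ W' : {W // ∀ k, Relaxed (W k)},
      obj c p γ w1 w2 X Y W ≤ obj c p γ w1 w2 X Y W'.1 :=
    fun W' => isMinOn_iff.1 hmin _ W'.2
  have : Nonempty {W : Fin T → Matrix (Fin (nX + 1)) (Fin (nY + 1)) ℝ // ∀ k, Relaxed (W k)} :=
    ⟨⟨W, hW⟩⟩
  exact le_antisymm (ciInf_le ⟨_, Set.forall_mem_range.2 hle⟩ ⟨W, hW⟩) (le_ciInf hle)

theorem exists_eq_of_obj_eq_zero (hc : 0 < c) (hp : p ≠ 0) (hγ : 0 < γ)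
    (hw1 : ∀ k < T, 0 < w1 k) (hw2 : ∀ k < T - 1, 0 < w2 k) (hW : ∀ k, Relaxed (W k))
    (h0 : obj c p γ w1 w2 X Y W = 0) {i : Fin nX} {k₀ : Fin T} (hk₀ : X i k₀ ≠ none) :
    ∃ j, Y j = X i := by
  obtain ⟨hD, hstep⟩ := (obj_eq_zero_iff hc.le hp hγ hw1 hw2 hW).1 h0
  have hlast : W k₀ i.castSucc (Fin.last nY) = 0 := by
    refine (mul_eq_zero.1 (hD k₀ _ _)).resolve_left ?_
    rwa [Dmat_castSucc_last, dG_rpow_eq_zero_iff hc hp]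
  obtain ⟨j, hj⟩ : ∃ j : Fin nY, W k₀ i.castSucc j.castSucc ≠ 0 := by
    by_contra! h
    simpa [Fin.sum_univ_castSucc, h, hlast] using (hW k₀).2.2.1 i
  refine ⟨j, funext fun k => ((dG_rpow_eq_zero_iff hc hp).1 ?_).symm⟩
  rw [← Dmat_castSucc_castSucc]
  refine (mul_eq_zero.1 (hD k _ _)).resolve_right ?_
  rwa [apply_eq_apply_of_adjacent_eq (f := fun k => W k i.castSucc j.castSucc)
    (fun k => hstep k i j) k k₀]

theorem Dmat_mul_assignMatrix_eq_zero (hc : 0 < c) (hp : p ≠ 0) {σ : Fin nX ≃ Fin nY}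
    (hσ : ∀ i, Y (σ i) = X i) (k : Fin T) (i j) :
    Dmat c p X Y k i j * assignMatrix σ i j = 0 := by
  induction i using Fin.lastCases with
  | last => simp [assignMatrix]
  | cast i =>
    induction j using Fin.lastCases with
    | last => simp [assignMatrix]
    | cast j =>
      by_cases hij : σ i = j
      · subst hij
        rw [Dmat_castSucc_castSucc, (dG_rpow_eq_zero_iff hc hp).2 (congrFun (hσ i) k).symm,
          zero_mul]
      · simp [assignMatrix, hij]

end Objective

/-- Identity of indiscernibles for the time-weighted LP trajectory metric: for families of
nonempty trajectories with no repetitions, the metric vanishes if and only if the two sets of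
trajectories coincide (i.e. the families agree up to a bijection of the index sets). -/
theorem dbar_eq_zero_iff {E : Type*} [MetricSpace E] {T nX nY : ℕ}
    (c p γ : ℝ) (hc : 0 < c) (hp : 1 ≤ p) (hγ : 0 < γ)
    (w1 w2 : ℕ → ℝ) (hw1 : ∀ k < T, 0 < w1 k) (hw2 : ∀ k < T - 1, 0 < w2 k)
    (X : Fin nX → Fin T → Option E) (Y : Fin nY → Fin T → Option E)
    (hXne : ∀ i, ∃ k, X i k ≠ none) (hYne : ∀ j, ∃ k, Y j k ≠ none)
    (hXinj : Function.Injective X) (hYinj : Function.Injective Y) :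
    dbar c p γ w1 w2 X Y = 0 ↔ ∃ σ : Fin nX ≃ Fin nY, ∀ i, Y (σ i) = X i := by
  have hp₀ : p ≠ 0 := by positivity
  obtain ⟨W₀, hW₀, hmin⟩ : ∃ W ∈ _, IsMinOn (obj c p γ w1 w2 X Y) _ W :=
    exists_isMinOn_obj (by linarith)
  rw [dbar_eq_obj_of_isMinOn hW₀ hmin]
  constructor
  · intro h0
    have hXY : ∀ i, X i ∈ Set.range Y := fun i =>
      exists_eq_of_obj_eq_zero hc hp₀ hγ hw1 hw2 hW₀ h0 (hXne i).choose_spec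
    have hYX : ∀ j, Y j ∈ Set.range X := fun j =>
      exists_eq_of_obj_eq_zero hc hp₀ hγ hw1 hw2 (fun k => (hW₀ k).transpose)
        (by rwa [obj_transpose]) (hYne j).choose_spec
    exact hXinj.exists_equiv_of_range_eq hYinj
      (Set.Subset.antisymm (Set.range_subset_iff.2 hXY) (Set.range_subset_iff.2 hYX))
  · rintro ⟨σ, hσ⟩
    have hWσ : ∀ k : Fin T, Relaxed (assignMatrix σ) := fun _ => relaxed_assignMatrix σ
    refine le_antisymm ?_ (obj_nonneg hc.le hγ.le (fun k hk => (hw1 k hk).le)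
      (fun k hk => (hw2 k hk).le) hW₀)
    calc obj c p γ w1 w2 X Y W₀ ≤ obj c p γ w1 w2 X Y fun _ => assignMatrix σ :=
          isMinOn_iff.1 hmin _ hWσ
      _ = 0 := (obj_eq_zero_iff hc.le hp₀ hγ hw1 hw2 hWσ).2
          ⟨fun k => Dmat_mul_assignMatrix_eq_zero hc hp₀ hσ k, fun _ _ _ => rfl⟩
end
end

section
/- With the standing setup, the time-weighted multi-dimensional assignment metric of Definition 2 equals the binary-matrix minimization. Precisely, for indexed families of trajectories X (size nX) and Y (size nY): the infimum over sequences (π^1, …, π^T) of assignment vectors π^k : {1,…,nX} → {0,1,…,nY} (with π^k_i = π^k_{i'} = j > 0 implying i = i') of ( Σ_{k=1}^{T} w1(k) [ Σ_{(i,j) ∈ θ^k(π^k)} d_G(X_i(k), Y_j(k))^p + (c^p/2)(|τ^k(X)| + |τ^k(Y)| − 2|θ^k(π^k)|) ] + Σ_{k=1}^{T−1} w2(k) γ^p Σ_{i=1}^{nX} s(π^k_i, π^{k+1}_i) )^(1/p) equals the infimum of the objective c(X, Y, W^{1:T}) over all sequences W^{1:T} of (nX+1)×(nY+1) matrices satisfying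 the relaxed assignment constraints with all entries in {0,1}. -/
open Finset

noncomputable section

/-- A valid assignment vector: `π i = some j` means trajectory `i` is assigned to
trajectory `j`, `π i = none` means it is unassigned; no two trajectories may be
assigned to the same `j`. -/
def ValidAssign {nX nY : ℕ} (π : Fin nX → Option (Fin nY)) : Prop :=
  ∀ i i' j, π i = some j → π i' = some j → i = i'

/-- The switching cost `s(a, b)`: `0` if the assignment is unchanged, `1` for a switch
between two assignments, and `1/2` for a half switch (to or from unassigned). -/
def swCost {nY : ℕ} (a b : Option (Fin nY)) : ℝ :=
  if a = b then 0 else if a ≠ none ∧ b ≠ none then 1 else 1 / 2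

/-- `|τ^k(X)|`: the number of trajectories present at time `k`. -/
def tauCard {E : Type*} {T n : ℕ} (X : Fin n → Fin T → Option E) (k : Fin T) : ℕ :=
  (Finset.univ.filter (fun i => (X i k).isSome)).card

open scoped Classical in
/-- The cost of a sequence of assignment vectors in the time-weighted multi-dimensional
assignment metric: for each time step, the localisation cost over the target-level
assignment `θ^k(π^k)` plus the cost `c^p/2` for each missed and false target, and the
time-weighted switching costs between consecutive assignment vectors. -/
def trajCost {E : Type*} [MetricSpace E] (c p γ : ℝ) (w1 w2 : ℕ → ℝ) {T nX nY : ℕ}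
    (X : Fin nX → Fin T → Option E) (Y : Fin nY → Fin T → Option E)
    (π : Fin T → Fin nX → Option (Fin nY)) : ℝ :=
  (∑ k : Fin T, w1 k.1 *
      ((∑ i : Fin nX,
          match π k i with
          | some j =>
              if X i k ≠ none ∧ Y j k ≠ none ∧ dG c p (X i k) (Y j k) < c then
                dG c p (X i k) (Y j k) ^ p
              else 0
          | none => 0) +
        c ^ p / 2 *
          ((tauCard X k : ℝ) + (tauCard Y k : ℝ) -
            2 * ∑ i : Fin nX,
              match π k i with
              | some j =>
                  if X i k ≠ none ∧ Y j k ≠ none ∧ dG c p (X i k) (Y j k) < c then (1 : ℝ)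
                  else 0
              | none => 0)) +
    ∑ k : Fin (T - 1), w2 k.1 * γ ^ p *
      ∑ i : Fin nX,
        swCost (π ⟨k.1, by have := k.2; omega⟩ i)
          (π ⟨k.1 + 1, by have := k.2; omega⟩ i)) ^ (1 / p)

section Helpers

open scoped Classical

set_option linter.unusedSectionVars false

variable {E : Type*} [MetricSpace E] {T nX nY : ℕ}

/-- The binary matrix sequence associated with a sequence of assignment vectors. -/
def Wof (π : Fin T → Fin nX → Option (Fin nY)) :
    Fin T → Matrix (Fin (nX + 1)) (Fin (nY + 1)) ℝ := fun k i j =>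
  if hi : (i : ℕ) < nX then
    if hj : (j : ℕ) < nY then
      (if π k ⟨i, hi⟩ = some ⟨j, hj⟩ then 1 else 0)
    else (if π k ⟨i, hi⟩ = none then 1 else 0)
  else
    if hj : (j : ℕ) < nY then
      (if ∀ i', π k i' ≠ some ⟨j, hj⟩ then 1 else 0)
    else 0

lemma Wof_cc (π : Fin T → Fin nX → Option (Fin nY)) (k : Fin T) (i : Fin nX) (j : Fin nY) :
    Wof π k i.castSucc j.castSucc = if π k i = some j then 1 else 0 := by
  simp [Wof, i.isLt, j.isLt]

lemma Wof_cl (π : Fin T → Fin nX → Option (Fin nY)) (k : Fin T) (i : Fin nX) :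
    Wof π k i.castSucc (Fin.last nY) = if π k i = none then 1 else 0 := by
  simp [Wof, i.isLt]

lemma Wof_lc (π : Fin T → Fin nX → Option (Fin nY)) (k : Fin T) (j : Fin nY) :
    Wof π k (Fin.last nX) j.castSucc = if ∀ i', π k i' ≠ some j then 1 else 0 := by
  simp [Wof, j.isLt]

lemma Wof_ll (π : Fin T → Fin nX → Option (Fin nY)) (k : Fin T) :
    Wof π k (Fin.last nX) (Fin.last nY) = 0 := by
  simp [Wof]

lemma extTraj_castSucc {n : ℕ} (X : Fin n → Fin T → Option E) (i : Fin n) :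
    extTraj X i.castSucc = X i := by
  have : ((i.castSucc : Fin (n+1)) : ℕ) < n := i.isLt
  simp [extTraj, this]

lemma extTraj_last {n : ℕ} (X : Fin n → Fin T → Option E) :
    extTraj X (Fin.last n) = fun _ => none := by
  simp [extTraj]

set_option linter.unusedSectionVars false

lemma one_of_one {ι : Type*} [Fintype ι] [DecidableEq ι] (f : ι → ℝ)
    (h0 : ∀ x, 0 ≤ f x) (hs : ∑ x, f x = 1) {a b : ι} (ha : f a = 1) (hb : f b = 1) :
    a = b := by
  by_contra hne
  have h2 : f a + f b ≤ ∑ x, f x := by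
    have := Finset.sum_le_sum_of_subset_of_nonneg (s := ({a, b} : Finset ι))
      (Finset.subset_univ _) (fun x _ _ => h0 x)
    rwa [Finset.sum_pair hne] at this
  rw [ha, hb, hs] at h2; linarith

lemma exists_one {ι : Type*} [Fintype ι] [Nonempty ι] (f : ι → ℝ)
    (hb : ∀ x, f x = 0 ∨ f x = 1) (hs : ∑ x, f x = 1) : ∃ a, f a = 1 := by
  by_contra h
  push_neg at h
  have : ∑ x : ι, f x = 0 := Finset.sum_eq_zero (fun x _ => (hb x).resolve_right (h x))
  rw [hs] at this; norm_num at this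

lemma Wof_binary (π : Fin T → Fin nX → Option (Fin nY)) (k : Fin T) :
    IsBinary (Wof π k) := by
  intro i j
  unfold Wof
  split_ifs <;> simp

lemma Wof_relaxed (π : Fin T → Fin nX → Option (Fin nY)) (hπ : ∀ k, ValidAssign (π k))
    (k : Fin T) : Relaxed (Wof π k) := by
  refine ⟨fun i j => ?_, fun j => ?_, fun i => ?_, Wof_ll π k⟩
  · rcases Wof_binary π k i j with h | h <;> rw [h] <;> norm_num
  · -- column sum
    rw [Fin.sum_univ_castSucc]
    simp only [Wof_cc, Wof_lc]
    by_cases h : ∃ i, π k i = some j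
    · obtain ⟨i0, hi0⟩ := h
      have : ∀ i : Fin nX, (if π k i = some j then (1:ℝ) else 0)
          = if i = i0 then 1 else 0 := by
        intro i
        by_cases hi : i = i0
        · subst hi; simp [hi0]
        · have : π k i ≠ some j := fun hh => hi (hπ k i i0 j hh hi0)
          simp [this, hi]
      rw [Finset.sum_congr rfl (fun i _ => this i)]
      have hlast : ¬ (∀ i', π k i' ≠ some j) := by push_neg; exact ⟨i0, hi0⟩
      simp [hlast]
    · push_neg at h
      have : ∀ i : Fin nX, (if π k i = some j then (1:ℝ) else 0) = 0 := by
        intro i; simp [h i]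
      rw [Finset.sum_congr rfl (fun i _ => this i)]
      simp [h]
  · -- row sum
    rw [Fin.sum_univ_castSucc]
    simp only [Wof_cc, Wof_cl]
    rcases hcase : π k i with _ | j0
    · simp
    · simp

lemma dG_none_some (c p : ℝ) (y : E) : dG c p none (some y) = c / 2 ^ (1/p) := rfl
lemma dG_some_none (c p : ℝ) (x : E) : dG c p (some x) none = c / 2 ^ (1/p) := rfl
lemma dG_none_none (c p : ℝ) : dG c p (none : Option E) none = 0 := rfl
lemma dG_some_some (c p : ℝ) (x y : E) : dG c p (some x) (some y) = min c (dist x y) := rfl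

lemma half_pow {c p : ℝ} (hc : 0 ≤ c) (hp : p ≠ 0) :
    (c / 2 ^ (1/p)) ^ p = c ^ p / 2 := by
  rw [Real.div_rpow hc (Real.rpow_nonneg (by norm_num) _),
    ← Real.rpow_mul (by norm_num : (0:ℝ) ≤ 2), one_div_mul_cancel hp, Real.rpow_one]

lemma tau_sum {n : ℕ} (Z : Fin n → Fin T → Option E) (k : Fin T) :
    (tauCard Z k : ℝ) = ∑ i : Fin n, (if Z i k ≠ none then (1:ℝ) else 0) := by
  rw [tauCard, Finset.card_filter]
  push_cast
  exact Finset.sum_congr rfl (fun i _ => by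
    by_cases h : Z i k = none <;> simp [h, Option.isSome_iff_ne_none])

lemma assigned_sum (π : Fin T → Fin nX → Option (Fin nY)) (k : Fin T)
    (hπ : ValidAssign (π k)) (g : Fin nY → ℝ) :
    ∑ j : Fin nY, (if ∃ i, π k i = some j then g j else 0) =
      ∑ i : Fin nX, (match π k i with | some j => g j | none => 0) := by
  have step : ∀ i, (match π k i with | some j => g j | none => 0)
      = ∑ j, if π k i = some j then g j else 0 := by
    intro i
    rcases h : π k i with _ | j0 <;> simp [h, eq_comm]
  rw [Finset.sum_congr rfl (fun i _ => step i), Finset.sum_comm]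
  refine Finset.sum_congr rfl (fun j _ => ?_)
  by_cases h : ∃ i, π k i = some j
  · obtain ⟨i0, hi0⟩ := h
    rw [if_pos (⟨i0, hi0⟩ : ∃ i, π k i = some j),
      Finset.sum_eq_single i0
        (fun b _ hb => by
          have hne : π k b ≠ some j := fun hh => hb (hπ b i0 j hh hi0)
          rw [if_neg hne])
        (by simp)]
    rw [if_pos hi0]
  · rw [if_neg h]
    push_neg at h
    exact (Finset.sum_eq_zero (fun i _ => if_neg (h i))).symm

lemma loc_step (c p : ℝ) (hc : 0 < c) (hp : p ≠ 0)
    (X : Fin nX → Fin T → Option E) (Y : Fin nY → Fin T → Option E)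
    (π : Fin T → Fin nX → Option (Fin nY)) (k : Fin T) (hπ : ValidAssign (π k)) :
    ∑ i, ∑ j, Dmat c p X Y k i j * Wof π k i j =
      (∑ i : Fin nX,
          match π k i with
          | some j =>
              if X i k ≠ none ∧ Y j k ≠ none ∧ dG c p (X i k) (Y j k) < c then
                dG c p (X i k) (Y j k) ^ p
              else 0
          | none => 0) +
        c ^ p / 2 *
          ((tauCard X k : ℝ) + (tauCard Y k : ℝ) -
            2 * ∑ i : Fin nX,
              match π k i with
              | some j =>
                  if X i k ≠ none ∧ Y j k ≠ none ∧ dG c p (X i k) (Y j k) < c then (1 : ℝ)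
                  else 0
              | none => 0) := by
  have hc' : (0:ℝ) ≤ c := le_of_lt hc
  -- abbreviations
  set loc : Fin nX → ℝ := fun i =>
    match π k i with
    | some j =>
        if X i k ≠ none ∧ Y j k ≠ none ∧ dG c p (X i k) (Y j k) < c then
          dG c p (X i k) (Y j k) ^ p
        else 0
    | none => 0 with hloc
  set θ : Fin nX → ℝ := fun i =>
    match π k i with
    | some j =>
        if X i k ≠ none ∧ Y j k ≠ none ∧ dG c p (X i k) (Y j k) < c then (1:ℝ)
        else 0
    | none => 0 with hθ
  set pX : Fin nX → ℝ := fun i => if X i k ≠ none then 1 else 0 with hpX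
  set pY : Fin nY → ℝ := fun j => if Y j k ≠ none then 1 else 0 with hpY
  set mY : Fin nX → ℝ := fun i =>
    match π k i with | some j => c ^ p / 2 * pY j | none => 0 with hmY
  -- value of dG against none
  have gnone : ∀ z : Option E, dG c p z none ^ p = c ^ p / 2 * (if z ≠ none then 1 else 0) := by
    intro z
    rcases z with _ | x
    · rw [dG_none_none, Real.zero_rpow hp]; simp
    · rw [dG_some_none, half_pow hc' hp]; simp
  have gnone' : ∀ z : Option E, dG c p none z ^ p = c ^ p / 2 * (if z ≠ none then 1 else 0) := by
    intro z
    rcases z with _ | x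
    · rw [dG_none_none, Real.zero_rpow hp]; simp
    · rw [dG_none_some, half_pow hc' hp]; simp
  -- expand the LHS
  have expand : ∑ i, ∑ j, Dmat c p X Y k i j * Wof π k i j =
      (∑ i : Fin nX,
        ((match π k i with | some j => dG c p (X i k) (Y j k) ^ p
                           | none => dG c p (X i k) none ^ p))) +
      ∑ j : Fin nY, (if ∀ i', π k i' ≠ some j then dG c p none (Y j k) ^ p else 0) := by
    rw [Fin.sum_univ_castSucc (n := nX)]
    congr 1
    · refine Finset.sum_congr rfl (fun i _ => ?_)
      rw [Fin.sum_univ_castSucc (n := nY)]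
      simp only [Wof_cc, Wof_cl, Dmat, extTraj_castSucc, extTraj_last]
      rcases h : π k i with _ | j0
      · simp [h]
      · rw [Finset.sum_eq_single j0]
        · simp [h]
        · intro b _ hb
          have hne : j0 ≠ b := Ne.symm hb
          simp [hne]
        · simp
    · rw [Fin.sum_univ_castSucc (n := nY)]
      simp only [Wof_lc, Wof_ll, Dmat, extTraj_castSucc, extTraj_last, mul_zero, add_zero]
      refine Finset.sum_congr rfl (fun j _ => ?_)
      by_cases h : ∀ i', π k i' ≠ some j <;> simp [h]
  rw [expand]
  -- rewrite the unassigned-column sum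
  have colsplit : ∑ j : Fin nY, (if ∀ i', π k i' ≠ some j then dG c p none (Y j k) ^ p else 0)
      = (∑ j : Fin nY, c ^ p / 2 * pY j) - ∑ i : Fin nX, mY i := by
    rw [← assigned_sum π k hπ (fun j => c ^ p / 2 * pY j), ← Finset.sum_sub_distrib]
    refine Finset.sum_congr rfl (fun j _ => ?_)
    rw [gnone' (Y j k)]
    by_cases h : ∀ i', π k i' ≠ some j
    · have h' : ¬ ∃ i, π k i = some j := by push_neg; exact h
      simp [h, h', hpY]
    · have h' : ∃ i, π k i = some j := by push_neg at h; exact h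
      simp [h, h', hpY]
  rw [colsplit]
  -- the pointwise identity in i
  have key : ∀ i : Fin nX,
      (match π k i with | some j => dG c p (X i k) (Y j k) ^ p
                        | none => dG c p (X i k) none ^ p)
      = loc i + c ^ p / 2 * pX i - c ^ p * θ i + mY i := by
    intro i
    rcases h : π k i with _ | j0
    · simp only [hloc, hθ, hmY, h]
      rw [gnone (X i k)]
      simp [hpX]
    · simp only [hloc, hθ, hmY, hpX, hpY, h]
      rcases hx : X i k with _ | x
      · rcases hy : Y j0 k with _ | y
        · have hcond : ¬((none : Option E) ≠ none ∧ (none : Option E) ≠ none ∧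
              dG c p (none : Option E) (none : Option E) < c) := by simp
          rw [if_neg hcond, if_neg hcond, dG_none_none, Real.zero_rpow hp]
          simp
        · have hcond : ¬((none : Option E) ≠ none ∧ (some y : Option E) ≠ none ∧
              dG c p (none : Option E) (some y) < c) := by simp
          rw [if_neg hcond, if_neg hcond, dG_none_some, half_pow hc' hp]
          simp
      · rcases hy : Y j0 k with _ | y
        · have hcond : ¬((some x : Option E) ≠ none ∧ (none : Option E) ≠ none ∧
              dG c p (some x : Option E) (none : Option E) < c) := by simp
          rw [if_neg hcond, if_neg hcond, dG_some_none, half_pow hc' hp]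
          simp
        · by_cases hd : dist x y < c
          · have hcond : (some x : Option E) ≠ none ∧ (some y : Option E) ≠ none ∧
                dG c p (some x) (some y) < c := by
              refine ⟨by simp, by simp, ?_⟩
              rw [dG_some_some]
              exact min_lt_iff.mpr (Or.inr hd)
            rw [if_pos hcond, if_pos hcond]
            simp
            ring
          · have hmin : min c (dist x y) = c := min_eq_left (le_of_not_gt hd)
            have hcond : ¬((some x : Option E) ≠ none ∧ (some y : Option E) ≠ none ∧
                dG c p (some x) (some y) < c) := by
              rintro ⟨-, -, hlt⟩
              rw [dG_some_some, hmin] at hlt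
              exact lt_irrefl c hlt
            rw [if_neg hcond, if_neg hcond, dG_some_some, hmin]
            simp
  rw [Finset.sum_congr rfl (fun i _ => key i)]
  rw [tau_sum X k, tau_sum Y k]
  simp only [← hpX, ← hpY]
  rw [Finset.sum_add_distrib, Finset.sum_sub_distrib, Finset.sum_add_distrib,
    ← Finset.mul_sum, ← Finset.mul_sum, ← Finset.mul_sum]
  ring

lemma sw_step (π : Fin T → Fin nX → Option (Fin nY)) (k k' : Fin T) (i : Fin nX) :
    ∑ j : Fin nY, |Wof π k i.castSucc j.castSucc - Wof π k' i.castSucc j.castSucc| =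
      2 * swCost (π k i) (π k' i) := by
  simp only [Wof_cc]
  rcases ha : π k i with _ | ja <;> rcases hb : π k' i with _ | jb
  · simp [swCost]
  · rw [Finset.sum_eq_single jb (fun b _ hbne => by simp [Ne.symm hbne]) (by simp)]
    simp [swCost]
  · rw [Finset.sum_eq_single ja (fun b _ hbne => by simp [Ne.symm hbne]) (by simp)]
    simp [swCost]
  · by_cases hj : ja = jb
    · subst hj
      simp [swCost]
    · have : ∀ b : Fin nY,
          |(if some ja = some b then (1:ℝ) else 0) - if some jb = some b then 1 else 0| =
            (if ja = b then 1 else 0) + (if jb = b then 1 else 0) := by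
        intro b
        by_cases h1 : ja = b <;> by_cases h2 : jb = b
        · exact absurd (h1.trans h2.symm) hj
        · simp [h1, h2]
        · simp [h1, h2]
        · simp [h1, h2]
      rw [Finset.sum_congr rfl (fun b _ => this b), Finset.sum_add_distrib]
      simp [swCost, hj]
      norm_num

lemma obj_Wof (c p γ : ℝ) (hc : 0 < c) (hp : p ≠ 0) (w1 w2 : ℕ → ℝ)
    (X : Fin nX → Fin T → Option E) (Y : Fin nY → Fin T → Option E)
    (π : Fin T → Fin nX → Option (Fin nY)) (hπ : ∀ k, ValidAssign (π k)) :
    obj c p γ w1 w2 X Y (Wof π) = trajCost c p γ w1 w2 X Y π := by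
  unfold obj trajCost
  congr 1
  have h1 : ∀ k : Fin T,
      w1 k.1 * ∑ i, ∑ j, Dmat c p X Y k i j * Wof π k i j =
      w1 k.1 * _ := fun k => congrArg _ (loc_step c p hc hp X Y π k (hπ k))
  rw [Finset.sum_congr rfl (fun k _ => h1 k)]
  congr 1
  have h2 : ∀ k : Fin (T - 1),
      w2 k.1 * ∑ i : Fin nX, ∑ j : Fin nY,
          |Wof π ⟨k.1, by have := k.2; omega⟩ i.castSucc j.castSucc -
            Wof π ⟨k.1 + 1, by have := k.2; omega⟩ i.castSucc j.castSucc| =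
      w2 k.1 * ∑ i : Fin nX, 2 * swCost (π ⟨k.1, by have := k.2; omega⟩ i)
          (π ⟨k.1 + 1, by have := k.2; omega⟩ i) := by
    intro k
    exact congrArg _ (Finset.sum_congr rfl (fun i _ => sw_step π _ _ i))
  rw [Finset.sum_congr rfl (fun k _ => h2 k)]
  rw [Finset.mul_sum]
  refine Finset.sum_congr rfl (fun k _ => ?_)
  rw [← Finset.mul_sum]
  ring

/-- The assignment vector sequence extracted from a sequence of binary matrices. -/
def piOf (W : Fin T → Matrix (Fin (nX + 1)) (Fin (nY + 1)) ℝ) :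
    Fin T → Fin nX → Option (Fin nY) := fun k i =>
  if h : ∃ j : Fin nY, W k i.castSucc j.castSucc = 1 then some h.choose else none

section Rec

variable {W : Fin T → Matrix (Fin (nX + 1)) (Fin (nY + 1)) ℝ}
  (hW : ∀ k, Relaxed (W k) ∧ IsBinary (W k))

include hW

lemma row_uniq {k : Fin T} {i : Fin nX} {a b : Fin (nY + 1)}
    (ha : W k i.castSucc a = 1) (hb : W k i.castSucc b = 1) : a = b :=
  one_of_one _ (fun j => (hW k).1.1 i.castSucc j) ((hW k).1.2.2.1 i) ha hb

lemma col_uniq {k : Fin T} {j : Fin nY} {a b : Fin (nX + 1)}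
    (ha : W k a j.castSucc = 1) (hb : W k b j.castSucc = 1) : a = b :=
  one_of_one _ (fun i => (hW k).1.1 i j.castSucc) ((hW k).1.2.1 j) ha hb

lemma piOf_valid (k : Fin T) : ValidAssign (piOf W k) := by
  intro i i' j h1 h2
  unfold piOf at h1 h2
  split_ifs at h1 h2 with hex1 hex2
  have e1 : W k i.castSucc j.castSucc = 1 := by
    have := hex1.choose_spec
    rwa [Option.some_inj.mp h1] at this
  have e2 : W k i'.castSucc j.castSucc = 1 := by
    have := hex2.choose_spec
    rwa [Option.some_inj.mp h2] at this
  exact Fin.castSucc_injective _ (col_uniq hW e1 e2)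

lemma piOf_eq_some_iff {k : Fin T} {i : Fin nX} {j : Fin nY} :
    piOf W k i = some j ↔ W k i.castSucc j.castSucc = 1 := by
  constructor
  · intro h
    unfold piOf at h
    split_ifs at h with hex
    have := hex.choose_spec
    rwa [Option.some_inj.mp h] at this
  · intro h
    have hex : ∃ j' : Fin nY, W k i.castSucc j'.castSucc = 1 := ⟨j, h⟩
    unfold piOf
    rw [dif_pos hex]
    have : hex.choose = j :=
      Fin.castSucc_injective _ (row_uniq hW hex.choose_spec h)
    rw [this]

lemma Wof_piOf : Wof (piOf W) = W := by
  funext k i j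
  have hbin := (hW k).2
  induction i using Fin.lastCases with
  | last =>
    induction j using Fin.lastCases with
    | last => rw [Wof_ll]; exact ((hW k).1.2.2.2).symm
    | cast j =>
      rw [Wof_lc]
      rcases hbin (Fin.last nX) j.castSucc with h0 | h1
      · rw [h0, if_neg]
        push_neg
        obtain ⟨a, ha⟩ := exists_one (fun a => W k a j.castSucc)
          (fun a => hbin a j.castSucc) ((hW k).1.2.1 j)
        have hane : a ≠ Fin.last nX := fun h => by rw [h, h0] at ha; norm_num at ha
        obtain ⟨a', rfl⟩ : ∃ a' : Fin nX, a = a'.castSucc :=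
          ⟨⟨a.1, lt_of_le_of_ne (Nat.lt_succ_iff.mp a.isLt) (fun h => hane (Fin.ext h))⟩,
            Fin.ext rfl⟩
        exact ⟨a', (piOf_eq_some_iff hW).mpr ha⟩
      · rw [h1, if_pos]
        intro i' hcontra
        have := (piOf_eq_some_iff hW).mp hcontra
        have : i'.castSucc = Fin.last nX := col_uniq hW this h1
        exact absurd (congrArg Fin.val this) (by simp [Fin.castSucc]; omega)
  | cast i =>
    induction j using Fin.lastCases with
    | last =>
      rw [Wof_cl]
      rcases hbin i.castSucc (Fin.last nY) with h0 | h1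
      · rw [h0, if_neg]
        obtain ⟨a, ha⟩ := exists_one (fun a => W k i.castSucc a)
          (fun a => hbin i.castSucc a) ((hW k).1.2.2.1 i)
        have hane : a ≠ Fin.last nY := fun h => by rw [h, h0] at ha; norm_num at ha
        obtain ⟨a', rfl⟩ : ∃ a' : Fin nY, a = a'.castSucc :=
          ⟨⟨a.1, lt_of_le_of_ne (Nat.lt_succ_iff.mp a.isLt) (fun h => hane (Fin.ext h))⟩,
            Fin.ext rfl⟩
        rw [(piOf_eq_some_iff hW).mpr ha]
        simp
      · rw [h1, if_pos]
        unfold piOf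
        rw [dif_neg]
        rintro ⟨j', hj'⟩
        have : j'.castSucc = Fin.last nY := row_uniq hW hj' h1
        exact absurd (congrArg Fin.val this) (by simp [Fin.castSucc]; omega)
    | cast j =>
      rw [Wof_cc]
      rcases hbin i.castSucc j.castSucc with h0 | h1
      · rw [h0, if_neg]
        intro hcontra
        rw [(piOf_eq_some_iff hW).mp hcontra] at h0
        norm_num at h0
      · rw [h1, if_pos ((piOf_eq_some_iff hW).mpr h1)]

end Rec

end Helpers

/-- The time-weighted multi-dimensional assignment metric of Definition 2 (infimum over
sequences of valid assignment vectors) equals the minimisation of the objective over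
sequences of binary matrices satisfying the relaxed assignment constraints. -/
theorem assign_eq_binary {E : Type*} [MetricSpace E] {T nX nY : ℕ}
    (c p γ : ℝ) (hc : 0 < c) (hp : 1 ≤ p) (hγ : 0 < γ)
    (w1 w2 : ℕ → ℝ) (hw1 : ∀ k < T, 0 < w1 k) (hw2 : ∀ k < T - 1, 0 < w2 k)
    (X : Fin nX → Fin T → Option E) (Y : Fin nY → Fin T → Option E) :
    (⨅ π : {π : Fin T → Fin nX → Option (Fin nY) // ∀ k, ValidAssign (π k)},
        trajCost c p γ w1 w2 X Y π.1) =
      dmd c p γ w1 w2 X Y := by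
  have hp0 : p ≠ 0 := ne_of_gt (lt_of_lt_of_le one_pos hp)
  rw [dmd, iInf, iInf]
  congr 1
  ext r
  simp only [Set.mem_range]
  constructor
  · rintro ⟨⟨π, hπ⟩, rfl⟩
    exact ⟨⟨Wof π, fun k => ⟨Wof_relaxed π hπ k, Wof_binary π k⟩⟩,
      obj_Wof c p γ hc hp0 w1 w2 X Y π hπ⟩
  · rintro ⟨⟨W, hW⟩, rfl⟩
    refine ⟨⟨piOf W, piOf_valid hW⟩, ?_⟩
    show trajCost c p γ w1 w2 X Y (piOf W) = obj c p γ w1 w2 X Y W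
    rw [← obj_Wof c p γ hc hp0 w1 w2 X Y (piOf W) (piOf_valid hW), Wof_piOf hW]
end
end
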